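/- arXiv:math/0506191 — 10 statements merged into one kernel-verified Lean document; each statement's English description precedes it below -/
import Mathlib

section
/- Fix an integer n ≥ 2. For every ε > 0 there exists K ∈ ℕ such that for every integer k ≥ K and every tuple a = (a₁,…,aₙ) of real numbers with 0 < a₁ ≤ a₂ ≤ … ≤ aₙ = 1 one has |σ_k(a)/⌊(k+n−1)/n⌋ − n/(1/a₁ + … + 1/aₙ)| ≤ ε. (That is, the normalized Ekeland–Hofer capacities \bar c_k converge uniformly on ellipsoids to the function c_∞(E(a₁,…,aₙ)) = n/(1/a₁ + … + 1/aₙ).) -/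
/-- `ehSigma a k` is the k-th smallest element (with multiplicity) of the multiset
`{m • aᵢ : m ≥ 1, 1 ≤ i ≤ n}`, characterized as `min {t > 0 : ∑ᵢ ⌊t/aᵢ⌋ ≥ k}`.
The k-th Ekeland–Hofer capacity of the ellipsoid `E(a)` is `π • ehSigma a k`. -/
noncomputable def ehSigma {n : ℕ} (a : Fin n → ℝ) (k : ℕ) : ℝ :=
  sInf {t : ℝ | 0 < t ∧ (k : ℤ) ≤ ∑ i, ⌊t / a i⌋}

/-!
Write `S = ∑ 1/aᵢ`. Since `t/aᵢ - 1 < ⌊t/aᵢ⌋ ≤ t/aᵢ`, the counting function `∑ ⌊t/aᵢ⌋` lies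
between `tS - n` and `tS`, so `k ≤ σ_k(a)·S ≤ k + n`. With `q = ⌊(k+n-1)/n⌋` one has
`k ≤ nq ≤ k + n - 1`, hence `|σ_k(a)·S - nq| ≤ n` and
`|σ_k(a)/q - n/S| ≤ n/(qS) ≤ 1/q`, because `aᵢ ≤ 1` gives `S ≥ n`. The rate `1/q` does not
depend on `a`.
-/

open Finset

theorem sum_floor_div_le {ι : Type*} [Fintype ι] (a : ι → ℝ) (t : ℝ) :
    ((∑ i, ⌊t / a i⌋ : ℤ) : ℝ) ≤ t * ∑ i, (a i)⁻¹ := by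
  push_cast
  rw [mul_sum]
  exact sum_le_sum fun i _ => Int.floor_le _

theorem mul_sum_inv_sub_card_le_sum_floor_div {ι : Type*} [Fintype ι] (a : ι → ℝ) (t : ℝ) :
    t * ∑ i, (a i)⁻¹ - Fintype.card ι ≤ ((∑ i, ⌊t / a i⌋ : ℤ) : ℝ) := by
  push_cast
  rw [mul_sum, Fintype.card_eq_sum_ones, Nat.cast_sum, Nat.cast_one, ← sum_sub_distrib]
  exact sum_le_sum fun i _ => (Int.sub_one_lt_floor _).le

section ehSigma

variable {n : ℕ} {a : Fin n → ℝ}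

theorem add_div_sum_inv_mem_ehSigma_set (hS : 0 < ∑ i, (a i)⁻¹) (k : ℕ) :
    ((k : ℝ) + n) / ∑ i, (a i)⁻¹ ∈ {t : ℝ | 0 < t ∧ (k : ℤ) ≤ ∑ i, ⌊t / a i⌋} := by
  have hn : 0 < n := Nat.pos_of_ne_zero fun h => by subst h; simp at hS
  refine ⟨div_pos (by positivity) hS, ?_⟩
  have h := mul_sum_inv_sub_card_le_sum_floor_div a (((k : ℝ) + n) / ∑ i, (a i)⁻¹)
  rw [div_mul_cancel₀ _ hS.ne', Fintype.card_fin, add_sub_cancel_right] at h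
  exact_mod_cast h

theorem ehSigma_mul_sum_inv_le (hS : 0 < ∑ i, (a i)⁻¹) (k : ℕ) :
    ehSigma a k * ∑ i, (a i)⁻¹ ≤ k + n := by
  have hbdd : BddBelow {t : ℝ | 0 < t ∧ (k : ℤ) ≤ ∑ i, ⌊t / a i⌋} :=
    ⟨0, fun t ht => ht.1.le⟩
  rw [← le_div_iff₀ hS]
  exact csInf_le hbdd (add_div_sum_inv_mem_ehSigma_set hS k)

theorem natCast_le_ehSigma_mul_sum_inv (hS : 0 < ∑ i, (a i)⁻¹) (k : ℕ) :
    (k : ℝ) ≤ ehSigma a k * ∑ i, (a i)⁻¹ := by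
  rw [← div_le_iff₀ hS]
  refine le_csInf ⟨_, add_div_sum_inv_mem_ehSigma_set hS k⟩ fun t ht => ?_
  rw [div_le_iff₀ hS]
  exact le_trans (by exact_mod_cast ht.2) (sum_floor_div_le a t)

end ehSigma

theorem card_le_sum_inv {ι : Type*} [Fintype ι] {a : ι → ℝ} (ha : ∀ i, 0 < a i)
    (ha₁ : ∀ i, a i ≤ 1) : (Fintype.card ι : ℝ) ≤ ∑ i, (a i)⁻¹ := by
  rw [Fintype.card_eq_sum_ones, Nat.cast_sum, Nat.cast_one]
  exact sum_le_sum fun i _ => one_le_inv₀ (ha i) |>.mpr (ha₁ i)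

theorem mul_add_sub_one_div_mem_Ico {n : ℕ} (hn : 0 < n) (k : ℕ) :
    n * ((k + n - 1) / n) ∈ Set.Ico k (k + n) := by
  rw [Set.mem_Ico]
  have := Nat.div_add_mod (k + n - 1) n
  have := Nat.mod_lt (k + n - 1) hn
  omega

theorem abs_ehSigma_div_sub_le {n k : ℕ} {a : Fin n → ℝ} (hn : 0 < n) (hk : 0 < k)
    (ha : ∀ i, 0 < a i) (ha₁ : ∀ i, a i ≤ 1) :
    |ehSigma a k / (((k + n - 1) / n : ℕ) : ℝ) - (n : ℝ) / ∑ i, (a i)⁻¹|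
      ≤ 1 / (((k + n - 1) / n : ℕ) : ℝ) := by
  set S := ∑ i, (a i)⁻¹
  set q := (k + n - 1) / n
  have hnS : (n : ℝ) ≤ S := by simpa using card_le_sum_inv ha ha₁
  have hn' : (0 : ℝ) < n := by exact_mod_cast hn
  have hS : 0 < S := hn'.trans_le hnS
  have hq : (0 : ℝ) < q := by
    exact_mod_cast Nat.div_pos (by omega) hn
  have hσ₁ : (k : ℝ) ≤ ehSigma a k * S := natCast_le_ehSigma_mul_sum_inv hS k
  have hσ₂ : ehSigma a k * S ≤ k + n := ehSigma_mul_sum_inv_le hS k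
  obtain ⟨hq₁, hq₂⟩ := mul_add_sub_one_div_mem_Ico hn k
  have hq₁' : (k : ℝ) ≤ n * q := by exact_mod_cast hq₁
  have hq₂' : (n : ℝ) * q + 1 ≤ k + n := by exact_mod_cast Nat.succ_le_of_lt hq₂
  have hnum : |ehSigma a k * S - q * n| ≤ n := abs_le.mpr ⟨by linarith, by linarith⟩
  calc |ehSigma a k / q - n / S|
      = |ehSigma a k * S - q * n| / (q * S) := by
        rw [div_sub_div _ _ hq.ne' hS.ne', abs_div, abs_of_pos (mul_pos hq hS)]
    _ ≤ n / (q * n) := by gcongr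
    _ = 1 / q := by field_simp

/-- The normalized Ekeland–Hofer capacities `σ_k(a)/⌊(k+n-1)/n⌋` converge uniformly on
ellipsoids `E(a₁,…,aₙ)` with `0 < a₁ ≤ … ≤ aₙ = 1` to `n/(1/a₁ + … + 1/aₙ)`. -/
theorem ehCapacities_converge_uniformly_on_ellipsoids (n : ℕ) (hn : 2 ≤ n) :
    ∀ ε : ℝ, 0 < ε → ∃ K : ℕ, ∀ k : ℕ, K ≤ k →
      ∀ a : Fin n → ℝ, (∀ i, 0 < a i) → (∀ i j : Fin n, i ≤ j → a i ≤ a j) →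
        a ⟨n - 1, by omega⟩ = 1 →
        |ehSigma a k / (((k + n - 1) / n : ℕ) : ℝ) - (n : ℝ) / ∑ i, (a i)⁻¹| ≤ ε := by
  intro ε hε
  refine ⟨n * ⌈1 / ε⌉₊, fun k hk a ha hmono hlast => ?_⟩
  have ha₁ : ∀ i, a i ≤ 1 := fun i =>
    hlast ▸ hmono _ _ (Fin.le_def.mpr (Nat.le_sub_one_of_lt i.isLt))
  have hk₀ : 0 < k := (Nat.mul_pos (by omega) (Nat.ceil_pos.mpr (by positivity))).trans_le hk
  have hq : ⌈1 / ε⌉₊ ≤ (k + n - 1) / n :=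
    Nat.le_of_mul_le_mul_left (hk.trans (mul_add_sub_one_div_mem_Ico (by omega) k).1) (by omega)
  have hq' : 1 / ε ≤ (((k + n - 1) / n : ℕ) : ℝ) := (Nat.le_ceil _).trans (by exact_mod_cast hq)
  calc _ ≤ 1 / (((k + n - 1) / n : ℕ) : ℝ) := abs_ehSigma_div_sub_le (by omega) hk₀ ha ha₁
    _ ≤ ε := (one_div_le ((one_div_pos.mpr hε).trans_le hq') hε).mpr hq'
end

section
/- Let k ≥ 2 be an integer and set m = ⌊(k+1)/2⌋. For every integer i with 1 ≤ i ≤ m and every real a ∈ (0,1]: if (i−1)/(k+1−i) ≤ a ≤ i/(k+1−i) then σ_k((a,1)) = (k+1−i)·a, and if i/(k+1−i) ≤ a ≤ i/(k−i) then σ_k((a,1)) = i. Equivalently, the normalized Ekeland–Hofer capacity \bar c_k(a) = σ_k((a,1))/m of the 4-dimensional ellipsoid E(a,1) is the piecewise linear function equal to ((k+1−i)/m)·a for (i−1)/(k+1−i) ≤ a ≤ i/(k+1−i) and equal to i/m for i/(k+1−i) ≤ a ≤ i/(k−i). -/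
/-- `ehSigma2 a k` is the k-th smallest element (with multiplicity) of the multiset
`{m•a : m ≥ 1} ∪ {m•1 : m ≥ 1}`, i.e. `σ_k((a,1)) = min {t > 0 : ⌊t/a⌋ + ⌊t⌋ ≥ k}`.
The k-th Ekeland–Hofer capacity of the 4-dimensional ellipsoid `E(a,1)` is `π • ehSigma2 a k`. -/
noncomputable def ehSigma2 (a : ℝ) (k : ℕ) : ℝ :=
  sInf {t : ℝ | 0 < t ∧ (k : ℤ) ≤ ⌊t / a⌋ + ⌊t⌋}

/-!
`N(t) = ⌊t/a⌋ + ⌊t⌋` counts the multiples of `a` and of `1` in `(0, t]`, so `σ_k((a,1))` is the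
least `t > 0` with `N(t) ≥ k`. On each piece the candidate value `c` is a multiple `n·a` or an
integer `m`; one floor in `N(c)` is then exact, the hypotheses on `a` pin down the other, and for
`0 < t < c` both floors drop so that `N(t) < k`.
-/

lemma pos_and_pos_of_le_div {a p q : ℝ} (ha : 0 < a) (hp : 0 ≤ p) (h : a ≤ p / q) :
    0 < p ∧ 0 < q := by
  rcases div_pos_iff.mp (ha.trans_le h) with hpq | hpq
  · exact hpq
  · linarith [hpq.1]

lemma ehSigma2_eq_natCast_mul {a : ℝ} {n j : ℕ} (hn : 0 < n) (ha : 0 < a)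
    (h₁ : (j : ℝ) ≤ n * a) (h₂ : n * a ≤ j + 1) : ehSigma2 a (n + j) = n * a := by
  refine IsLeast.csInf_eq ⟨⟨by positivity, ?_⟩, fun t ⟨_, hcount⟩ => ?_⟩
  · have hj : (j : ℤ) ≤ ⌊(n : ℝ) * a⌋ := Int.le_floor.mpr (by exact_mod_cast h₁)
    rw [mul_div_cancel_right₀ _ ha.ne', Int.floor_natCast]
    push_cast
    omega
  · by_contra! hlt
    have hfloor_div : ⌊t / a⌋ < n := Int.floor_lt.mpr (by push_cast; rwa [div_lt_iff₀ ha])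
    have hfloor : ⌊t⌋ < j + 1 := Int.floor_lt.mpr (by push_cast; linarith)
    push_cast at hcount
    omega

lemma ehSigma2_eq_natCast {a : ℝ} {n m : ℕ} (hm : 0 < m) (ha : 0 < a)
    (h₁ : n * a ≤ m) (h₂ : (m : ℝ) ≤ (n + 1) * a) : ehSigma2 a (n + m) = m := by
  refine IsLeast.csInf_eq ⟨⟨by positivity, ?_⟩, fun t ⟨_, hcount⟩ => ?_⟩
  · have hn : (n : ℤ) ≤ ⌊(m : ℝ) / a⌋ := Int.le_floor.mpr (by push_cast; rwa [le_div_iff₀ ha])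
    rw [Int.floor_natCast]
    push_cast
    omega
  · by_contra! hlt
    have hfloor_div : ⌊t / a⌋ < n + 1 :=
      Int.floor_lt.mpr (by push_cast; rw [div_lt_iff₀ ha]; linarith)
    have hfloor : ⌊t⌋ < m := Int.floor_lt.mpr (by exact_mod_cast hlt)
    push_cast at hcount
    omega

theorem ehCapacity_piecewise_linear_on_ellipsoids_general (k : ℕ)
    (i : ℕ)
    (a : ℝ) (ha : 0 < a) :
    (((i : ℝ) - 1) / ((k : ℝ) + 1 - i) ≤ a → a ≤ (i : ℝ) / ((k : ℝ) + 1 - i) →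
      ehSigma2 a k = ((k : ℝ) + 1 - i) * a) ∧
    ((i : ℝ) / ((k : ℝ) + 1 - i) ≤ a → a ≤ (i : ℝ) / ((k : ℝ) - i) →
      ehSigma2 a k = (i : ℝ)) := by
  constructor
  · intro h₁ h₂
    obtain ⟨hi, hki⟩ := pos_and_pos_of_le_div ha i.cast_nonneg h₂
    have hi : 0 < i := Nat.cast_pos.mp hi
    have hik : i < k + 1 := by exact_mod_cast (by linarith : (i : ℝ) < k + 1)
    obtain ⟨j, rfl⟩ : ∃ j, i = j + 1 := ⟨i - 1, by omega⟩
    obtain ⟨n, rfl⟩ : ∃ n, k = n + j := ⟨k - j, by omega⟩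
    have hn : ((n + j : ℕ) : ℝ) + 1 - (j + 1 : ℕ) = n := by push_cast; ring
    have hnpos : (0 : ℝ) < n := hn ▸ hki
    rw [hn] at h₁ h₂ ⊢
    push_cast at h₁ h₂
    exact ehSigma2_eq_natCast_mul (Nat.cast_pos.mp hnpos) ha
      (by rwa [add_sub_cancel_right, div_le_iff₀ hnpos, mul_comm] at h₁)
      (by rwa [le_div_iff₀ hnpos, mul_comm] at h₂)
  · intro h₁ h₂
    obtain ⟨hi, hki⟩ := pos_and_pos_of_le_div ha i.cast_nonneg h₂
    have hik : i < k := by exact_mod_cast (by linarith : (i : ℝ) < k)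
    obtain ⟨n, rfl⟩ : ∃ n, k = n + i := ⟨k - i, by omega⟩
    have hn : ((n + i : ℕ) : ℝ) - i = n := by push_cast; ring
    have hn1 : ((n + i : ℕ) : ℝ) + 1 - i = n + 1 := by push_cast; ring
    rw [hn] at h₂ hki
    rw [hn1] at h₁
    exact ehSigma2_eq_natCast (Nat.cast_pos.mp hi) ha
      (by rwa [le_div_iff₀ hki, mul_comm] at h₂)
      (by rwa [div_le_iff₀ (by positivity), mul_comm] at h₁)

/-- The normalized Ekeland–Hofer capacity `σ_k((a,1))/m`, `m = ⌊(k+1)/2⌋`, of `E(a,1)` is the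
piecewise linear function equal to `(k+1-i)a/m` on `[(i-1)/(k+1-i), i/(k+1-i)]` and
equal to `i/m` on `[i/(k+1-i), i/(k-i)]`, for integers `1 ≤ i ≤ m`. -/
theorem ehCapacity_piecewise_linear_on_ellipsoids (k : ℕ) (hk : 2 ≤ k)
    (i : ℕ) (hi : 1 ≤ i) (him : i ≤ (k + 1) / 2)
    (a : ℝ) (ha : 0 < a) (ha1 : a ≤ 1) :
    (((i : ℝ) - 1) / ((k : ℝ) + 1 - i) ≤ a → a ≤ (i : ℝ) / ((k : ℝ) + 1 - i) →
      ehSigma2 a k = ((k : ℝ) + 1 - i) * a) ∧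
    ((i : ℝ) / ((k : ℝ) + 1 - i) ≤ a → a ≤ (i : ℝ) / ((k : ℝ) - i) →
      ehSigma2 a k = (i : ℝ)) :=
  ehCapacity_piecewise_linear_on_ellipsoids_general k i a ha
end

section
/- Let k ≥ 2 be an integer and set m = ⌊(k+1)/2⌋. Let c : (0,1] → ℝ be a function such that c is nondecreasing and a ↦ c(a)/a is nonincreasing on (0,1]. If c(l/(k+1−l)) ≥ l/m for every integer l with 1 ≤ l ≤ m, then c(a) ≥ σ_k((a,1))/m = \bar c_k(a) for every a ∈ (0,1]. (The points a_l = l/(k+1−l) are the left endpoints of the plateaus of \bar c_k, on which \bar c_k takes the value l/m.) -/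
/-- Minimality characterization of the normalized Ekeland–Hofer capacity `\bar c_k`:
if `c : (0,1] → ℝ` is nondecreasing, `c(a)/a` is nonincreasing, and
`c(a_l) ≥ l/m` at the left plateau endpoints `a_l = l/(k+1-l)`, `1 ≤ l ≤ m = ⌊(k+1)/2⌋`,
then `c ≥ \bar c_k` on `(0,1]`. -/
theorem ehCapacity_minimality (k : ℕ) (hk : 2 ≤ k) (c : ℝ → ℝ)
    (hmono : ∀ a b : ℝ, 0 < a → a ≤ b → b ≤ 1 → c a ≤ c b)
    (hscale : ∀ a b : ℝ, 0 < a → a ≤ b → b ≤ 1 → c b / b ≤ c a / a)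
    (hval : ∀ l : ℕ, 1 ≤ l → l ≤ (k + 1) / 2 →
      (l : ℝ) / (((k + 1) / 2 : ℕ) : ℝ) ≤ c ((l : ℝ) / ((k : ℝ) + 1 - l))) :
    ∀ a : ℝ, 0 < a → a ≤ 1 →
      ehSigma2 a k / (((k + 1) / 2 : ℕ) : ℝ) ≤ c a := by
  intro a ha ha1
  set m : ℕ := (k + 1) / 2 with hm
  have hm1 : 1 ≤ m := by omega
  have hmk : m < k := by omega
  have hk2m : k ≤ 2 * m := by omega
  have hmpos : (0 : ℝ) < (m : ℝ) := by exact_mod_cast hm1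
  have h1a : (0 : ℝ) < 1 + a := by linarith
  set l₀ : ℕ := ⌊a * ((k : ℝ) + 1) / (1 + a)⌋₊ with hl₀def
  have hfl : (l₀ : ℝ) ≤ a * ((k : ℝ) + 1) / (1 + a) := Nat.floor_le (by positivity)
  have hfl' : a * ((k : ℝ) + 1) / (1 + a) < (l₀ : ℝ) + 1 := Nat.lt_floor_add_one _
  clear_value l₀
  have hA : (l₀ : ℝ) * (1 + a) ≤ a * ((k : ℝ) + 1) := (le_div_iff₀ h1a).mp hfl
  have hB : a * ((k : ℝ) + 1) < ((l₀ : ℝ) + 1) * (1 + a) := (div_lt_iff₀ h1a).mp hfl'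
  have hl₀m : l₀ ≤ m := by
    have h2 : (2 * l₀ : ℝ) ≤ (k : ℝ) + 1 := by nlinarith
    have : (2 * l₀ : ℕ) ≤ k + 1 := by exact_mod_cast h2
    omega
  have hl₀k : l₀ < k := by omega
  have hkl : (0 : ℝ) < (k : ℝ) - (l₀ : ℝ) := by
    have : (l₀ : ℝ) < (k : ℝ) := by exact_mod_cast hl₀k
    linarith
  have hkey1 : (l₀ : ℝ) ≤ a * ((k : ℝ) + 1 - (l₀ : ℝ)) := by nlinarith
  have hkey2 : a * ((k : ℝ) - (l₀ : ℝ)) < (l₀ : ℝ) + 1 := by nlinarith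
  have hbdd : BddBelow {t : ℝ | 0 < t ∧ (k : ℤ) ≤ ⌊t / a⌋ + ⌊t⌋} :=
    ⟨0, fun x hx => le_of_lt hx.1⟩
  rw [div_le_iff₀ hmpos]
  by_cases hcase : a * ((k : ℝ) - (l₀ : ℝ)) ≤ (l₀ : ℝ)
  · -- plateau case: σ_k(a) ≤ l₀
    have hl₀1 : 1 ≤ l₀ := by
      by_contra h
      have : l₀ = 0 := by omega
      rw [this] at hcase
      push_cast at hcase
      nlinarith
    have hσ : ehSigma2 a k ≤ (l₀ : ℝ) := by
      apply csInf_le hbdd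
      constructor
      · have h0 : 0 < l₀ := hl₀1
        exact_mod_cast h0
      · rw [Int.floor_natCast]
        have hfloor : ((k : ℤ) - (l₀ : ℤ)) ≤ ⌊(l₀ : ℝ) / a⌋ := by
          apply Int.le_floor.mpr
          rw [le_div_iff₀ ha]
          push_cast
          nlinarith
        linarith
    -- c(a_{l₀}) ≤ c a
    have hkl1 : (0 : ℝ) < (k : ℝ) + 1 - (l₀ : ℝ) := by linarith
    have hapos : (0 : ℝ) < (l₀ : ℝ) / ((k : ℝ) + 1 - (l₀ : ℝ)) := by
      apply div_pos _ hkl1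
      have h0 : 0 < l₀ := hl₀1
      exact_mod_cast h0
    have hale : (l₀ : ℝ) / ((k : ℝ) + 1 - (l₀ : ℝ)) ≤ a := by
      rw [div_le_iff₀ hkl1]; linarith
    have hmono' := hmono _ a hapos hale ha1
    have hval' := hval l₀ hl₀1 hl₀m
    rw [div_le_iff₀ hmpos] at hval'
    have := mul_le_mul_of_nonneg_right hmono' hmpos.le
    linarith
  · -- slope case: σ_k(a) ≤ (k - l₀) * a
    push_neg at hcase
    have hl₀m' : l₀ + 1 ≤ m := by
      by_contra h
      have hle : l₀ = m := by omega
      have hkm : (k : ℝ) - (l₀ : ℝ) ≤ (m : ℝ) := by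
        rw [hle]
        have : (k : ℝ) ≤ 2 * (m : ℝ) := by exact_mod_cast hk2m
        linarith
      rw [hle] at hcase hkl
      have hc5 : (l₀ : ℝ) = (m : ℝ) := by rw [hle]
      have h5 : a * ((k : ℝ) - (m : ℝ)) ≤ (k : ℝ) - (m : ℝ) := by nlinarith
      rw [hc5] at hkm
      linarith
    have hσ : ehSigma2 a k ≤ ((k : ℝ) - (l₀ : ℝ)) * a := by
      apply csInf_le hbdd
      constructor
      · positivity
      · have hta : ((k : ℝ) - (l₀ : ℝ)) * a / a = (k : ℝ) - (l₀ : ℝ) :=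
          mul_div_cancel_right₀ _ (ne_of_gt ha)
        have h1 : ⌊((k : ℝ) - (l₀ : ℝ)) * a / a⌋ = (k : ℤ) - (l₀ : ℤ) := by
          rw [hta]
          have : (k : ℝ) - (l₀ : ℝ) = (((k : ℤ) - (l₀ : ℤ) : ℤ) : ℝ) := by push_cast; ring
          rw [this, Int.floor_intCast]
        have h2 : (l₀ : ℤ) ≤ ⌊((k : ℝ) - (l₀ : ℝ)) * a⌋ := by
          apply Int.le_floor.mpr
          push_cast
          nlinarith
        have h4 : (l₀ : ℤ) ≤ (k : ℤ) := by exact_mod_cast hl₀k.le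
        rw [h1]
        linarith
    -- scaling from b = (l₀+1)/(k-l₀)
    set b : ℝ := ((l₀ : ℝ) + 1) / ((k : ℝ) - (l₀ : ℝ)) with hbdef
    clear_value b
    have hbpos : 0 < b := by
      rw [hbdef]
      apply div_pos _ hkl
      positivity
    have hab : a ≤ b := by
      rw [hbdef, le_div_iff₀ hkl]
      exact hkey2.le
    have hb1 : b ≤ 1 := by
      rw [hbdef, div_le_one hkl]
      have : (2 * (l₀ + 1) : ℕ) ≤ k + 1 := by omega
      have h2 : (2 * (l₀ : ℝ) + 2) ≤ (k : ℝ) + 1 := by exact_mod_cast this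
      linarith
    have hscale' := hscale a b ha hab hb1
    have hval' := hval (l₀ + 1) (by omega) hl₀m'
    push_cast at hval'
    have harg : (k : ℝ) + 1 - ((l₀ : ℝ) + 1) = (k : ℝ) - (l₀ : ℝ) := by ring
    rw [harg] at hval'
    have hcb : ((l₀ : ℝ) + 1) / (m : ℝ) ≤ c b := by rw [hbdef]; exact hval' 
    have h2 : ((l₀ : ℝ) + 1) / (m : ℝ) / b ≤ c b / b := by gcongr
    have hbb : ((l₀ : ℝ) + 1) / (m : ℝ) / b = ((k : ℝ) - (l₀ : ℝ)) / (m : ℝ) := by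
      rw [hbdef]
      field_simp
    rw [hbb] at h2
    have h3 : ((k : ℝ) - (l₀ : ℝ)) / (m : ℝ) ≤ c a / a := h2.trans hscale'
    rw [div_le_div_iff₀ hmpos ha] at h3
    linarith
end

section
/- Let k ≥ 2 be an integer and set m = ⌊(k+1)/2⌋. Let c : (0,1] → ℝ be a function such that c is nondecreasing and a ↦ c(a)/a is nonincreasing on (0,1]. If c(l/(k−l)) ≤ l/m for every integer l with 1 ≤ l ≤ ⌊k/2⌋, and if c(a)/a ≤ k/m for all a ∈ (0,1] (equivalently, lim_{a→0⁺} c(a)/a ≤ k/m, the limit existing since c(a)/a is nonincreasing), then c(a) ≤ σ_k((a,1))/m = \bar c_k(a) for every a ∈ (0,1]. (The points b_l = l/(k−l) are the right endpoints of the plateaus of \bar c_k, on which \bar c_k takes the value l/m.) -/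
set_option maxHeartbeats 1000000


/-- Maximality characterization of the normalized Ekeland–Hofer capacity `\bar c_k`:
if `c : (0,1] → ℝ` is nondecreasing, `c(a)/a` is nonincreasing,
`c(b_l) ≤ l/m` at the right plateau endpoints `b_l = l/(k-l)`, `1 ≤ l ≤ ⌊k/2⌋`,
and `c(a)/a ≤ k/m` for all `a ∈ (0,1]` (with `m = ⌊(k+1)/2⌋`), then `c ≤ \bar c_k` on `(0,1]`. -/
theorem ehCapacity_maximality (k : ℕ) (hk : 2 ≤ k) (c : ℝ → ℝ)
    (hmono : ∀ a b : ℝ, 0 < a → a ≤ b → b ≤ 1 → c a ≤ c b)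
    (hscale : ∀ a b : ℝ, 0 < a → a ≤ b → b ≤ 1 → c b / b ≤ c a / a)
    (hval : ∀ l : ℕ, 1 ≤ l → l ≤ k / 2 →
      c ((l : ℝ) / ((k : ℝ) - l)) ≤ (l : ℝ) / (((k + 1) / 2 : ℕ) : ℝ))
    (hslope : ∀ a : ℝ, 0 < a → a ≤ 1 → c a / a ≤ (k : ℝ) / (((k + 1) / 2 : ℕ) : ℝ)) :
    ∀ a : ℝ, 0 < a → a ≤ 1 →
      c a ≤ ehSigma2 a k / (((k + 1) / 2 : ℕ) : ℝ) := by
  intro a ha ha1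
  set M : ℝ := (((k + 1) / 2 : ℕ) : ℝ) with hM
  have hMpos : (0:ℝ) < M := by
    have h1 : 1 ≤ (k+1)/2 := by omega
    rw [hM]
    exact_mod_cast Nat.lt_of_lt_of_le Nat.zero_lt_one h1
  have hkpos : (0:ℝ) < (k:ℝ) := by exact_mod_cast Nat.lt_of_lt_of_le (by norm_num) hk
  clear_value M
  rw [ehSigma2, le_div_iff₀ hMpos]
  apply le_csInf
  · refine ⟨(k:ℝ), hkpos, ?_⟩
    have h1 : (0:ℤ) ≤ ⌊(k:ℝ)/a⌋ := Int.floor_nonneg.mpr (by positivity)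
    have h2 : ⌊((k:ℕ):ℝ)⌋ = (k:ℤ) := Int.floor_natCast k
    omega
  · rintro t ⟨htpos, hfl⟩
    have htj : (⌊t⌋ : ℝ) ≤ t := Int.floor_le t
    have hj0 : 0 ≤ ⌊t⌋ := Int.floor_nonneg.mpr htpos.le
    set jn : ℕ := ⌊t⌋.toNat with hjn
    have hjnr : (jn : ℝ) = (⌊t⌋ : ℝ) := by
      exact_mod_cast Int.toNat_of_nonneg hj0
    have hti : ((k:ℝ) - jn) * a ≤ t := by
      have h1 : ((k:ℤ) - ⌊t⌋ : ℝ) ≤ (⌊t/a⌋ : ℝ) := by exact_mod_cast by omega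
      have h2 : (⌊t/a⌋ : ℝ) ≤ t / a := Int.floor_le _
      have h3 : ((k:ℝ) - jn) ≤ t / a := by rw [hjnr]; push_cast at h1 ⊢; linarith
      calc ((k:ℝ) - jn) * a ≤ (t/a) * a := by nlinarith
        _ = t := by field_simp
    have htjn : (jn : ℝ) ≤ t := by rw [hjnr]; exact htj
    clear_value jn
    by_cases h0 : jn = 0
    · -- t ≥ k * a, use slope condition
      have hs := hslope a ha ha1
      have hc : c a ≤ (k:ℝ)/M * a := by
        rw [div_le_iff₀ ha] at hs; linarith
      have hkat : (k:ℝ) * a ≤ t := by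
        have hz : ((jn:ℕ):ℝ) = 0 := by exact_mod_cast h0
        nlinarith
      have hka : 0 < (k:ℝ) * a := by positivity
      calc c a * M ≤ ((k:ℝ)/M * a) * M := by nlinarith
        _ = (k:ℝ) * a := by field_simp
        _ ≤ t := hkat
    · by_cases hbig : k ≤ jn
      · -- t ≥ k, c a ≤ c 1 ≤ k/M
        have hc1 : c a ≤ c 1 := hmono a 1 ha ha1 le_rfl
        have hs := hslope 1 one_pos le_rfl
        simp only [div_one] at hs
        have hkt : (k:ℝ) ≤ t := le_trans (by exact_mod_cast hbig) htjn
        calc c a * M ≤ ((k:ℝ)/M) * M := by nlinarith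
          _ = (k:ℝ) := by field_simp
          _ ≤ t := hkt
      · -- 1 ≤ jn ≤ k - 1
        have hjn1 : 1 ≤ jn := by omega
        have hjnk : jn < k := by omega
        obtain ⟨l, hl⟩ : ∃ l, l = min jn (k - jn) := ⟨_, rfl⟩
        have hl1 : 1 ≤ l := by omega
        have hl2 : l ≤ k / 2 := by omega
        have hllt : l < k := by omega
        have hlkl : l ≤ k - l := by omega
        have hlr : (l:ℝ) ≤ (k:ℝ) := by exact_mod_cast hllt.le
        have hdpos : (0:ℝ) < (k:ℝ) - l := by
          have : (l:ℝ) < (k:ℝ) := by exact_mod_cast hllt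
          linarith
        have hlpos : (0:ℝ) < (l:ℝ) := by exact_mod_cast hl1
        set b : ℝ := (l : ℝ) / ((k : ℝ) - l) with hb
        have hbpos : 0 < b := div_pos hlpos hdpos
        have hb1 : b ≤ 1 := by
          rw [hb, div_le_one hdpos]
          have h2 : ((k - l : ℕ):ℝ) = (k:ℝ) - l := by
            rw [Nat.cast_sub hllt.le]
          have h3 : (l:ℝ) ≤ ((k - l : ℕ):ℝ) := by exact_mod_cast hlkl
          linarith
        have hcb := hval l hl1 hl2
        rw [← hb] at hcb
        clear_value b
        by_cases hab : a ≤ b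
        · have hc : c a ≤ (l:ℝ)/M := le_trans (hmono a b ha hab hb1) hcb
          have hljn : (l:ℝ) ≤ (jn:ℝ) := by exact_mod_cast (by omega : l ≤ jn)
          calc c a * M ≤ ((l:ℝ)/M) * M := by nlinarith
            _ = (l:ℝ) := by field_simp
            _ ≤ t := le_trans hljn htjn
        · have hba : b ≤ a := (not_le.mp hab).le
          have hs := hscale b a hbpos hba ha1
          have hcbb : c b / b ≤ ((k:ℝ) - l)/M := by
            have h1 : c b / b ≤ ((l:ℝ)/M) / b := by gcongr
            have h2 : ((l:ℝ)/M) / b = ((k:ℝ) - l)/M := by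
              rw [hb]; field_simp
            linarith [h2 ▸ h1]
          have hca : c a ≤ a * (((k:ℝ) - l)/M) := by
            have h4 := le_trans hs hcbb
            rw [div_le_iff₀ ha] at h4; linarith
          have hkey : a * ((k:ℝ) - l) ≤ t := by
            rcases le_or_gt (k - jn) jn with hcase | hcase
            · have hlval : l = k - jn := by omega
              have h5 : (l:ℝ) = (k:ℝ) - jn := by
                rw [hlval, Nat.cast_sub hjnk.le]
              have hjnpos : (0:ℝ) ≤ (jn:ℝ) := by positivity
              calc a * ((k:ℝ) - l) = a * (jn:ℝ) := by rw [h5]; ring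
                _ ≤ 1 * (jn:ℝ) := mul_le_mul_of_nonneg_right ha1 hjnpos
                _ = (jn:ℝ) := one_mul _
                _ ≤ t := htjn
            · have hlval : l = jn := by omega
              have h5 : (l:ℝ) = (jn:ℝ) := by exact_mod_cast hlval
              rw [h5, mul_comm]
              exact hti
          calc c a * M ≤ (a * (((k:ℝ) - l)/M)) * M := by nlinarith
            _ = a * ((k:ℝ) - l) := by field_simp
            _ ≤ t := hkey
end

section
/- Let n ≥ 1 and let a = (a₁,…,aₙ) and b = (b₁,…,bₙ) be tuples of positive real numbers with a₁ ≤ … ≤ aₙ and b₁ ≤ … ≤ bₙ. If σ_k(a) = σ_k(b) for every integer k ≥ 1, then aᵢ = bᵢ for all i. (An ellipsoid in ℝ^{2n} is uniquely determined by its sequence of Ekeland–Hofer capacities.) -/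
private lemma eh_sum_mono {n : ℕ} {a : Fin n → ℝ} (ha : ∀ i, 0 < a i) {s t : ℝ}
    (hst : s ≤ t) : ∑ i, ⌊s / a i⌋ ≤ ∑ i, ⌊t / a i⌋ :=
  Finset.sum_le_sum fun i _ => Int.floor_le_floor (by gcongr; exact (ha i).le)

private lemma eh_lb {n : ℕ} (hn : 1 ≤ n) {a : Fin n → ℝ} (ha : ∀ i, 0 < a i)
    (hmono : ∀ i j : Fin n, i ≤ j → a i ≤ a j) {k : ℕ} (hk : 1 ≤ k) :
    ∀ t ∈ {t : ℝ | 0 < t ∧ (k : ℤ) ≤ ∑ i, ⌊t / a i⌋}, a ⟨0, hn⟩ ≤ t := by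
  rintro t ⟨ht, hsum⟩
  by_contra hcon
  push_neg at hcon
  have : ∀ i, ⌊t / a i⌋ ≤ 0 := by
    intro i
    have h1 : t < a i := lt_of_lt_of_le hcon (hmono ⟨0, hn⟩ i (Fin.mk_le_mk.2 (Nat.zero_le _)))
    have h2 : ⌊t / a i⌋ < 1 := Int.floor_lt.2 (by simpa using (div_lt_one (ha i)).2 h1)
    omega
  have hle : ∑ i, ⌊t / a i⌋ ≤ 0 := Finset.sum_nonpos fun i _ => this i
  have : (1 : ℤ) ≤ ∑ i, ⌊t / a i⌋ := le_trans (by exact_mod_cast hk) hsum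
  omega

private lemma eh_mem {n : ℕ} (hn : 1 ≤ n) {a : Fin n → ℝ} (ha : ∀ i, 0 < a i)
    (hmono : ∀ i j : Fin n, i ≤ j → a i ≤ a j) {k : ℕ} (hk : 1 ≤ k) :
    0 < ehSigma a k ∧ (k : ℤ) ≤ ∑ i, ⌊ehSigma a k / a i⌋ := by
  set S := {t : ℝ | 0 < t ∧ (k : ℤ) ≤ ∑ i, ⌊t / a i⌋} with hS
  have i0 : Fin n := ⟨0, hn⟩
  have hne : S.Nonempty := by
    refine ⟨k * a ⟨0, hn⟩, ?_, ?_⟩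
    · have hk' : (0 : ℝ) < k := by exact_mod_cast hk
      exact mul_pos hk' (ha _)
    · calc (k : ℤ) = ⌊(k * a ⟨0, hn⟩) / a ⟨0, hn⟩⌋ := by
            rw [mul_div_assoc, div_self (ha _).ne', mul_one]; simp
        _ ≤ ∑ i, ⌊(k * a ⟨0, hn⟩) / a i⌋ := by
            refine Finset.single_le_sum (f := fun i => ⌊(↑k * a ⟨0, hn⟩) / a i⌋)
              (fun i _ => ?_) (Finset.mem_univ _)
            exact Int.floor_nonneg.2 (div_nonneg (mul_nonneg (Nat.cast_nonneg k) (ha _).le) (ha i).le)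
  have hbdd : BddBelow S := ⟨a ⟨0, hn⟩, eh_lb hn ha hmono hk⟩
  have hpos : a ⟨0, hn⟩ ≤ ehSigma a k := le_csInf hne (eh_lb hn ha hmono hk)
  have hσpos : 0 < ehSigma a k := lt_of_lt_of_le (ha _) hpos
  refine ⟨hσpos, ?_⟩
  by_contra hcon
  push_neg at hcon
  set σ := ehSigma a k with hσ
  have hεpos : ∀ i, 0 < ((⌊σ / a i⌋ : ℝ) + 1) * a i - σ := by
    intro i
    have h1 : σ / a i < (⌊σ / a i⌋ : ℝ) + 1 := Int.lt_floor_add_one _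
    have := (div_lt_iff₀ (ha i)).1 h1
    linarith
  obtain ⟨i1⟩ : Nonempty (Fin n) := ⟨⟨0, hn⟩⟩
  set ε := Finset.univ.inf' ⟨i1, Finset.mem_univ _⟩ (fun i => ((⌊σ / a i⌋ : ℝ) + 1) * a i - σ)
    with hε
  have hεp : 0 < ε := by
    refine (Finset.lt_inf'_iff _).2 ?_
    exact fun i _ => hεpos i
  have hkey : ∀ t ∈ S, σ + ε ≤ t := by
    intro t htS
    have ht1 : σ ≤ t := csInf_le hbdd htS
    by_contra hc
    push_neg at hc
    have hfl : ∀ i, ⌊t / a i⌋ ≤ ⌊σ / a i⌋ := by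
      intro i
      have h2 : ε ≤ ((⌊σ / a i⌋ : ℝ) + 1) * a i - σ := Finset.inf'_le _ (Finset.mem_univ i)
      have h3 : t < ((⌊σ / a i⌋ : ℝ) + 1) * a i := by linarith
      have : t / a i < (⌊σ / a i⌋ : ℝ) + 1 := (div_lt_iff₀ (ha i)).2 h3
      have := Int.floor_lt.2 (by exact_mod_cast this)
      omega
    have : ∑ i, ⌊t / a i⌋ ≤ ∑ i, ⌊σ / a i⌋ := Finset.sum_le_sum fun i _ => hfl i
    have := le_trans htS.2 this
    omega
  have : σ + ε ≤ σ := le_csInf hne hkey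
  linarith

private lemma eh_le_iff {n : ℕ} (hn : 1 ≤ n) {a : Fin n → ℝ} (ha : ∀ i, 0 < a i)
    (hmono : ∀ i j : Fin n, i ≤ j → a i ≤ a j) {k : ℕ} (hk : 1 ≤ k) {t : ℝ} (ht : 0 < t) :
    ehSigma a k ≤ t ↔ (k : ℤ) ≤ ∑ i, ⌊t / a i⌋ := by
  constructor
  · intro hle
    exact le_trans (eh_mem hn ha hmono hk).2 (eh_sum_mono ha hle)
  · intro hsum
    exact csInf_le ⟨a ⟨0, hn⟩, eh_lb hn ha hmono hk⟩ ⟨ht, hsum⟩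

private lemma eh_key {n : ℕ} (a b : Fin n → ℝ) (hapos : ∀ i, 0 < a i)
    (hbpos : ∀ i, 0 < b i) (hbmono : ∀ i j : Fin n, i ≤ j → b i ≤ b j)
    (hN : ∀ t : ℝ, 0 < t → ∑ i, ⌊t / a i⌋ = ∑ i, ⌊t / b i⌋)
    (j : Fin n) (IH : ∀ i, i < j → a i = b i) : ¬ a j < b j := by
  intro hlt
  have ht : 0 < a j := hapos j
  have heq := hN (a j) ht
  have hsum : (0 : ℤ) < ∑ i, (⌊a j / a i⌋ - ⌊a j / b i⌋) := by
    apply Finset.sum_pos'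
    · intro i _
      rcases lt_or_ge i j with hij | hij
      · rw [IH i hij]; simp
      · have hb : a j < b i := lt_of_lt_of_le hlt (hbmono j i hij)
        have h0 : ⌊a j / b i⌋ = 0 := by
          rw [Int.floor_eq_zero_iff]
          exact ⟨div_nonneg ht.le (hbpos i).le, (div_lt_one (hbpos i)).2 hb⟩
        have h1 : (0 : ℤ) ≤ ⌊a j / a i⌋ := Int.floor_nonneg.2 (div_nonneg ht.le (hapos i).le)
        omega
    · refine ⟨j, Finset.mem_univ j, ?_⟩
      have h1 : ⌊a j / a j⌋ = 1 := by rw [div_self ht.ne']; simp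
      have hb : a j < b j := hlt
      have h0 : ⌊a j / b j⌋ = 0 := by
        rw [Int.floor_eq_zero_iff]
        exact ⟨div_nonneg ht.le (hbpos j).le, (div_lt_one (hbpos j)).2 hb⟩
      omega
  rw [Finset.sum_sub_distrib] at hsum
  omega

/-- An ellipsoid is uniquely determined by its Ekeland–Hofer capacities: if two
nondecreasing tuples of positive reals have the same `σ_k` for all `k ≥ 1`, they coincide. -/
theorem ellipsoid_determined_by_ehCapacities (n : ℕ) (hn : 1 ≤ n) (a b : Fin n → ℝ)
    (hapos : ∀ i, 0 < a i) (hbpos : ∀ i, 0 < b i)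
    (hamono : ∀ i j : Fin n, i ≤ j → a i ≤ a j)
    (hbmono : ∀ i j : Fin n, i ≤ j → b i ≤ b j)
    (h : ∀ k : ℕ, 1 ≤ k → ehSigma a k = ehSigma b k) :
    a = b := by
  have hN : ∀ t : ℝ, 0 < t → ∑ i, ⌊t / a i⌋ = ∑ i, ⌊t / b i⌋ := by
    intro t ht
    have hNa : (0 : ℤ) ≤ ∑ i, ⌊t / a i⌋ :=
      Finset.sum_nonneg fun i _ => Int.floor_nonneg.2 (div_nonneg ht.le (hapos i).le)
    have hNb : (0 : ℤ) ≤ ∑ i, ⌊t / b i⌋ :=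
      Finset.sum_nonneg fun i _ => Int.floor_nonneg.2 (div_nonneg ht.le (hbpos i).le)
    have hab : ∀ k : ℕ, 1 ≤ k → ((k : ℤ) ≤ ∑ i, ⌊t / a i⌋ ↔ (k : ℤ) ≤ ∑ i, ⌊t / b i⌋) := by
      intro k hk
      rw [← eh_le_iff hn hapos hamono hk ht, ← eh_le_iff hn hbpos hbmono hk ht, h k hk]
    refine le_antisymm ?_ ?_
    · rcases (lt_or_ge 0 (∑ i, ⌊t / a i⌋)) with hp | hp
      · have hk1 : 1 ≤ (∑ i, ⌊t / a i⌋).toNat := by omega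
        have := (hab _ hk1).1 (by omega)
        omega
      · omega
    · rcases (lt_or_ge 0 (∑ i, ⌊t / b i⌋)) with hp | hp
      · have hk1 : 1 ≤ (∑ i, ⌊t / b i⌋).toNat := by omega
        have := (hab _ hk1).2 (by omega)
        omega
      · omega
  have main : ∀ m : ℕ, ∀ j : Fin n, (j : ℕ) = m → a j = b j := by
    intro m
    induction m using Nat.strong_induction_on with
    | _ m IH =>
      intro j hj
      have IH' : ∀ i : Fin n, i < j → a i = b i := by
        intro i hi
        exact IH (i : ℕ) (by rw [← hj]; exact hi) i rfl
      have h1 := eh_key a b hapos hbpos hbmono hN j IH'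
      have h2 := eh_key b a hbpos hapos hamono (fun t ht => (hN t ht).symm) j
        (fun i hi => (IH' i hi).symm)
      push_neg at h1 h2
      linarith
  funext j
  exact main (j : ℕ) j rfl
end

section
/- For every integer k ≥ 1 the pairs a = (1, k − 1/2) and b = (1, k + 1/2) satisfy σ_i(a) = σ_i(b) = i for all integers i with 1 ≤ i ≤ k − 1, while σ_k(a) = k − 1/2 and σ_k(b) = k; in particular σ_k(a) ≠ σ_k(b). (Thus for every k there exist two ellipsoids whose first k−1 Ekeland–Hofer capacities agree but whose k-th Ekeland–Hofer capacities differ, so the Ekeland–Hofer capacities are functionally independent.) -/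
/-! Below `min k a` only the multiples `1, …, k - 1` of `1` occur, and `a` itself is the first
multiple of `a`; so when `k ≤ a + 1` the `k`-th term of the spectrum of `(1, a)` is `min k a`. -/

/-- `ehSigmaPair a₁ a₂ k` is the k-th smallest element (with multiplicity) of the multiset
`{m•a₁ : m ≥ 1} ∪ {m•a₂ : m ≥ 1}`, i.e. `σ_k((a₁,a₂)) = min {t > 0 : ⌊t/a₁⌋ + ⌊t/a₂⌋ ≥ k}`.
The k-th Ekeland–Hofer capacity of the ellipsoid `E(a₁,a₂)` is `π • ehSigmaPair a₁ a₂ k`. -/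
noncomputable def ehSigmaPair (a₁ a₂ : ℝ) (k : ℕ) : ℝ :=
  sInf {t : ℝ | 0 < t ∧ (k : ℤ) ≤ ⌊t / a₁⌋ + ⌊t / a₂⌋}

theorem floor_add_floor_div_lt_of_lt_min {a t : ℝ} {k : ℕ} (ht : 0 < t) (hlt : t < min (k : ℝ) a) :
    ⌊t⌋ + ⌊t / a⌋ < k := by
  have ha : 0 < a := ht.trans (hlt.trans_le (min_le_right _ _))
  have hfloor : ⌊t⌋ < k := Int.floor_lt.2 (by exact_mod_cast hlt.trans_le (min_le_left _ _))
  have hdiv : ⌊t / a⌋ = 0 := Int.floor_eq_zero_iff.2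
    ⟨div_nonneg ht.le ha.le, (div_lt_one ha).2 (hlt.trans_le (min_le_right _ _))⟩
  omega

theorem le_floor_min_add_floor_min_div {a : ℝ} {k : ℕ} (ha : 0 < a) (hka : (k : ℝ) ≤ a + 1) :
    (k : ℤ) ≤ ⌊min (k : ℝ) a⌋ + ⌊min (k : ℝ) a / a⌋ := by
  rcases min_cases (k : ℝ) a with ⟨hmin, -⟩ | ⟨hmin, -⟩
  · have : 0 ≤ ⌊(k : ℝ) / a⌋ := Int.floor_nonneg.2 (div_nonneg k.cast_nonneg ha.le)
    rw [hmin, Int.floor_natCast]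
    omega
  · have : (k : ℤ) - 1 ≤ ⌊a⌋ := Int.le_floor.2 (by push_cast; linarith)
    rw [hmin, div_self ha.ne', Int.floor_one]
    omega

theorem ehSigmaPair_one_eq_min {a : ℝ} {k : ℕ} (hk : 1 ≤ k) (ha : 0 < a) (hka : (k : ℝ) ≤ a + 1) :
    ehSigmaPair 1 a k = min (k : ℝ) a := by
  simp only [ehSigmaPair, div_one]
  refine IsLeast.csInf_eq ⟨⟨lt_min (by exact_mod_cast hk) ha, le_floor_min_add_floor_min_div ha hka⟩, ?_⟩
  rintro t ⟨ht, hsum⟩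
  by_contra! hlt
  have := floor_add_floor_div_lt_of_lt_min ht hlt
  omega

/-- For every `k ≥ 1`, the ellipsoids `E(1, k - 1/2)` and `E(1, k + 1/2)` have
`σ_i = i` for `1 ≤ i ≤ k - 1`, while `σ_k(E(1, k-1/2)) = k - 1/2 ≠ k = σ_k(E(1, k+1/2))`:
the Ekeland–Hofer capacities are functionally independent. -/
theorem ehCapacities_functionally_independent (k : ℕ) (hk : 1 ≤ k) :
    (∀ i : ℕ, 1 ≤ i → i ≤ k - 1 →
      ehSigmaPair 1 ((k : ℝ) - 1 / 2) i = (i : ℝ) ∧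
      ehSigmaPair 1 ((k : ℝ) + 1 / 2) i = (i : ℝ)) ∧
    ehSigmaPair 1 ((k : ℝ) - 1 / 2) k = (k : ℝ) - 1 / 2 ∧
    ehSigmaPair 1 ((k : ℝ) + 1 / 2) k = (k : ℝ) := by
  have hk' : (1 : ℝ) ≤ k := by exact_mod_cast hk
  refine ⟨fun i hi hik => ?_, ?_, ?_⟩
  · have hik' : (i : ℝ) + 1 ≤ k := by exact_mod_cast (by omega : i + 1 ≤ k)
    constructor <;>
      rw [ehSigmaPair_one_eq_min hi (by linarith) (by linarith), min_eq_left (by linarith)]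
  · rw [ehSigmaPair_one_eq_min hk (by linarith) (by linarith), min_eq_right (by linarith)]
  · rw [ehSigmaPair_one_eq_min hk (by linarith) (by linarith), min_eq_left (by linarith)]
end

section
/- Let n ≥ 1 and N₀ ≥ 0 be integers and let a = (a₁,…,aₙ) and b = (b₁,…,bₙ) be tuples of positive real numbers. Suppose there exist strictly increasing maps f, g : {1,2,3,…} → {1,2,3,…} with f(j) ≤ j + N₀ and g(j) ≤ j + N₀ for all j ≥ 1 (i.e. each map omits at most N₀ indices), such that σ_{f(j)}(a) = σ_{g(j)}(b) for all j ≥ 1. Then the multisets {a₁,…,aₙ} and {b₁,…,bₙ} coincide. (A bounded ellipsoid can be recovered uniquely from the increasing sequence obtained from its sequence of Ekeland–Hofer capacities by removing at most N₀ numbers.) -/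
noncomputable def cnt {n : ℕ} (a : Fin n → ℝ) (t : ℝ) : ℤ := ∑ i, ⌊t / a i⌋
noncomputable def cntm {n : ℕ} (a : Fin n → ℝ) (t : ℝ) : ℤ := ∑ i, (⌈t / a i⌉ - 1)

variable {n : ℕ} {a : Fin n → ℝ}

lemma ehSigma_def' (k : ℕ) : ehSigma a k = sInf {t : ℝ | 0 < t ∧ (k:ℤ) ≤ cnt a t} := rfl

lemma cnt_mono (hapos : ∀ i, 0 < a i) {s t : ℝ} (hst : s ≤ t) : cnt a s ≤ cnt a t :=
  Finset.sum_le_sum fun i _ => Int.floor_le_floor ((div_le_div_iff_of_pos_right (hapos i)).2 hst)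

lemma cntm_nonneg (hapos : ∀ i, 0 < a i) {t : ℝ} (ht : 0 < t) : 0 ≤ cntm a t :=
  Finset.sum_nonneg fun i _ => by
    have : 0 < ⌈t / a i⌉ := Int.ceil_pos.2 (div_pos ht (hapos i))
    omega

lemma cntm_le_cnt {t : ℝ} : cntm a t ≤ cnt a t :=
  Finset.sum_le_sum fun i _ => by
    have := Int.ceil_le_floor_add_one (t / a i); omega

lemma cnt_lt_of_lt (hapos : ∀ i, 0 < a i) {s t : ℝ} (hs : 0 < s) (hst : s < t) :
    cnt a s ≤ cntm a t := by
  refine Finset.sum_le_sum fun i _ => ?_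
  have h1 : (⌊s / a i⌋ : ℝ) < ⌈t / a i⌉ :=
    lt_of_le_of_lt (Int.floor_le _) (lt_of_lt_of_le ((div_lt_div_iff_of_pos_right (hapos i)).2 hst) (Int.le_ceil _))
  have h2 : ⌊s / a i⌋ < ⌈t / a i⌉ := by exact_mod_cast h1
  omega

lemma exists_close_below (hapos : ∀ i, 0 < a i) {t : ℝ} (ht : 0 < t) :
    ∃ s, 0 < s ∧ s < t ∧ cntm a t ≤ cnt a s := by
  classical
  -- δ_i = t - a i * (⌈t/a i⌉ - 1) > 0
  set F : Fin n → ℝ := fun i => t - a i * ((⌈t / a i⌉ : ℝ) - 1) with hF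
  have hFpos : ∀ i, 0 < F i := by
    intro i
    have h1 : (⌈t / a i⌉ : ℝ) - 1 < t / a i := by
      have := Int.ceil_lt_add_one (t / a i); push_cast at this ⊢; linarith
    have := (mul_lt_mul_iff_right₀ (hapos i)).2 h1
    rw [mul_div_cancel₀ _ (hapos i).ne'] at this
    simp only [hF]; nlinarith
  by_cases hn0 : n = 0
  · exact ⟨t/2, by linarith, by linarith, by subst hn0; simp [cnt, cntm]⟩
  have hne : (Finset.univ : Finset (Fin n)).Nonempty := by
    refine Finset.univ_nonempty_iff.2 ?_
    exact ⟨⟨0, Nat.pos_of_ne_zero hn0⟩⟩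
  set δ : ℝ := min (Finset.univ.inf' hne F) t with hδ
  have hδpos : 0 < δ := by
    refine lt_min ?_ ht
    exact (Finset.lt_inf'_iff hne).2 fun i _ => hFpos i
  refine ⟨t - δ/2, by simp only [hδ] at hδpos ⊢; linarith [min_le_right (Finset.univ.inf' hne F) t], by linarith, ?_⟩
  refine Finset.sum_le_sum fun i _ => ?_
  rw [Int.le_floor]
  have hδle : δ ≤ F i := le_trans (min_le_left _ _) (Finset.inf'_le F (Finset.mem_univ i))
  have : a i * ((⌈t / a i⌉ : ℝ) - 1) ≤ t - δ := by simp only [hF] at hδle; linarith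
  rw [le_div_iff₀ (hapos i)] at *
  push_cast
  nlinarith

lemma sigma_mem (hn : 1 ≤ n) (hapos : ∀ i, 0 < a i) {k : ℕ} (hk : 1 ≤ k) :
    0 < ehSigma a k ∧ (k:ℤ) ≤ cnt a (ehSigma a k) := by
  classical
  have hES : ehSigma a k = sInf {t : ℝ | 0 < t ∧ (k:ℤ) ≤ cnt a t} := rfl
  rw [hES]
  set S : Set ℝ := {t : ℝ | 0 < t ∧ (k:ℤ) ≤ cnt a t} with hS
  have hi0 : (⟨0, hn⟩ : Fin n) = ⟨0, hn⟩ := rfl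
  set i0 : Fin n := ⟨0, hn⟩
  have hne : S.Nonempty := by
    refine ⟨(k:ℝ) * a i0, ?_, ?_⟩
    · exact mul_pos (by exact_mod_cast hk) (hapos i0)
    · have h1 : ⌊(k:ℝ) * a i0 / a i0⌋ = (k:ℤ) := by
        rw [mul_div_cancel_right₀ _ (hapos i0).ne']; exact_mod_cast Int.floor_intCast (k:ℤ)
      calc (k:ℤ) = ⌊(k:ℝ) * a i0 / a i0⌋ := h1.symm
        _ ≤ cnt a ((k:ℝ) * a i0) := by
            refine Finset.single_le_sum (f := fun i => ⌊(k:ℝ) * a i0 / a i⌋) (fun i _ => ?_) (Finset.mem_univ i0)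
            exact Int.floor_nonneg.2 (div_nonneg (mul_nonneg (Nat.cast_nonneg k) (hapos i0).le) (hapos i).le)
  -- lower bound: amin
  have hnef : (Finset.univ : Finset (Fin n)).Nonempty := ⟨i0, Finset.mem_univ _⟩
  set amin : ℝ := Finset.univ.inf' hnef a with hamin
  have haminpos : 0 < amin := (Finset.lt_inf'_iff hnef).2 fun i _ => hapos i
  have hlb : ∀ t ∈ S, amin ≤ t := by
    intro t ht
    obtain ⟨htpos, htcnt⟩ := ht
    by_contra hlt
    push_neg at hlt
    have : cnt a t ≤ 0 := by
      refine Finset.sum_nonpos fun i _ => ?_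
      have : t / a i < 1 := (div_lt_one (hapos i)).2
        (lt_of_lt_of_le hlt (Finset.inf'_le a (Finset.mem_univ i)))
      have := Int.floor_lt.2 (show t / a i < ((1:ℤ):ℝ) by exact_mod_cast this)
      omega
    omega
  have hbdd : BddBelow S := ⟨amin, hlb⟩
  have hσlb : amin ≤ sInf S := le_csInf hne hlb
  have hσpos : 0 < sInf S := lt_of_lt_of_le haminpos hσlb
  refine ⟨hσpos, ?_⟩
  by_contra hcnt
  push_neg at hcnt
  -- right continuity
  set σ := sInf S with hσ
  set F : Fin n → ℝ := fun i => a i * ((⌊σ / a i⌋ : ℝ) + 1) - σ with hF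
  have hFpos : ∀ i, 0 < F i := by
    intro i
    have h1 : σ / a i < (⌊σ / a i⌋ : ℝ) + 1 := Int.lt_floor_add_one _
    have := (mul_lt_mul_iff_right₀ (hapos i)).2 h1
    rw [mul_div_cancel₀ _ (hapos i).ne'] at this
    simp only [hF]; nlinarith
  set ε : ℝ := Finset.univ.inf' hnef F with hε
  have hεpos : 0 < ε := (Finset.lt_inf'_iff hnef).2 fun i _ => hFpos i
  obtain ⟨t, htS, htlt⟩ := Real.lt_sInf_add_pos hne hεpos
  have hσt : σ ≤ t := csInf_le hbdd htS
  have hle : cnt a t ≤ cnt a σ := by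
    refine Finset.sum_le_sum fun i _ => ?_
    have hεle : ε ≤ F i := Finset.inf'_le F (Finset.mem_univ i)
    have h2 : t < a i * ((⌊σ / a i⌋ : ℝ) + 1) := by simp only [hF] at hεle; linarith
    have h3 : t / a i < (⌊σ / a i⌋ : ℝ) + 1 := (div_lt_iff₀ (hapos i)).2 (by linarith [h2, mul_comm (a i) ((⌊σ / a i⌋ : ℝ) + 1)])
    have h4 : ⌊t / a i⌋ < ⌊σ / a i⌋ + 1 :=
      Int.floor_lt.2 (by exact_mod_cast h3)
    omega
  exact absurd (le_trans htS.2 hle) (by omega)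

lemma sigma_le_iff (hn : 1 ≤ n) (hapos : ∀ i, 0 < a i) {k : ℕ} (hk : 1 ≤ k) {t : ℝ} (ht : 0 < t) :
    ehSigma a k ≤ t ↔ (k:ℤ) ≤ cnt a t := by
  constructor
  · intro hle
    exact le_trans (sigma_mem hn hapos hk).2 (cnt_mono hapos hle)
  · intro hcnt
    exact csInf_le ⟨Finset.univ.inf' ⟨⟨0,hn⟩, Finset.mem_univ _⟩ a, by
      intro s hs
      obtain ⟨hspos, hscnt⟩ := hs
      by_contra hlt
      push_neg at hlt
      have : cnt a s ≤ 0 := by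
        refine Finset.sum_nonpos fun i _ => ?_
        have : s / a i < 1 := (div_lt_one (hapos i)).2
          (lt_of_lt_of_le hlt (Finset.inf'_le a (Finset.mem_univ i)))
        have := Int.floor_lt.2 (show s / a i < ((1:ℤ):ℝ) by exact_mod_cast this)
        omega
      simp only [cnt] at this
      omega⟩ ⟨ht, hcnt⟩

lemma sigma_eq_iff (hn : 1 ≤ n) (hapos : ∀ i, 0 < a i) {k : ℕ} (hk : 1 ≤ k) {t : ℝ} (ht : 0 < t) :
    ehSigma a k = t ↔ (cntm a t < k ∧ (k:ℤ) ≤ cnt a t) := by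
  constructor
  · intro heq
    have hcnt : (k:ℤ) ≤ cnt a t := heq ▸ (sigma_mem hn hapos hk).2
    refine ⟨?_, hcnt⟩
    obtain ⟨s, hs0, hst, hsge⟩ := exists_close_below hapos ht
    have hnle : ¬ ehSigma a k ≤ s := by rw [heq]; linarith
    rw [sigma_le_iff hn hapos hk hs0] at hnle
    push_neg at hnle
    omega
  · rintro ⟨hcm, hc⟩
    have hle : ehSigma a k ≤ t := (sigma_le_iff hn hapos hk ht).2 hc
    rcases eq_or_lt_of_le hle with h | h
    · exact h
    · exfalso
      have hσpos := (sigma_mem hn hapos hk).1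
      have := cnt_lt_of_lt hapos hσpos h
      have := (sigma_mem hn hapos hk).2
      omega

open Classical in
noncomputable def multF {n : ℕ} (a : Fin n → ℝ) (t : ℝ) : ℕ :=
  (Finset.univ.filter (fun i => ∃ m : ℕ, 1 ≤ m ∧ t = (m:ℝ) * a i)).card

lemma multF_eq (hapos : ∀ i, 0 < a i) {t : ℝ} (ht : 0 < t) :
    (multF a t : ℤ) = cnt a t - cntm a t := by
  classical
  have key : cnt a t - cntm a t
      = ∑ i, (if (∃ m : ℕ, 1 ≤ m ∧ t = (m:ℝ) * a i) then (1:ℤ) else 0) := by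
    rw [cnt, cntm, ← Finset.sum_sub_distrib]
    refine Finset.sum_congr rfl fun i _ => ?_
    by_cases hP : ∃ m : ℕ, 1 ≤ m ∧ t = (m:ℝ) * a i
    · obtain ⟨m, hm, hmt⟩ := hP
      have hx : t / a i = ((m:ℤ):ℝ) := by
        rw [hmt, mul_div_cancel_right₀ _ (hapos i).ne']; norm_cast
      rw [if_pos ⟨m, hm, hmt⟩, hx, Int.floor_intCast, Int.ceil_intCast]
      ring
    · rw [if_neg hP]
      have hxpos : 0 < t / a i := div_pos ht (hapos i)
      have hne : (⌊t / a i⌋ : ℝ) ≠ t / a i := by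
        intro hfe
        apply hP
        have hfl : 0 < ⌊t / a i⌋ := by exact_mod_cast hfe ▸ hxpos
        refine ⟨⌊t / a i⌋.toNat, by omega, ?_⟩
        have hzc : ((⌊t / a i⌋.toNat : ℕ) : ℤ) = ⌊t / a i⌋ := Int.toNat_of_nonneg hfl.le
        have hc : ((⌊t / a i⌋.toNat : ℕ) : ℝ) = t / a i :=
          (show ((⌊t / a i⌋.toNat : ℕ) : ℝ) = ((⌊t / a i⌋ : ℤ) : ℝ) by exact_mod_cast hzc).trans hfe
        rw [hc, div_mul_cancel₀ t (hapos i).ne']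
      have h1 : ⌊t / a i⌋ < ⌈t / a i⌉ :=
        Int.lt_ceil.2 (lt_of_le_of_ne (Int.floor_le _) hne)
      have h2 := Int.ceil_le_floor_add_one (t / a i)
      omega
  rw [key, Finset.sum_boole, multF]

lemma le_f (f : ℕ → ℕ) (hf1 : ∀ j, 1 ≤ j → 1 ≤ f j)
    (hfmono : ∀ j j', 1 ≤ j → j < j' → f j < f j') : ∀ j, 1 ≤ j → j ≤ f j := by
  intro j hj
  induction j with
  | zero => omega
  | succ m ih =>
    rcases Nat.eq_zero_or_pos m with hm | hm
    · subst hm; exact hf1 1 le_rfl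
    · have h1 := hfmono m (m+1) hm (by omega)
      have h2 := ih hm
      omega

lemma stepA {n : ℕ} (hn : 1 ≤ n) (a b : Fin n → ℝ)
    (hapos : ∀ i, 0 < a i) (hbpos : ∀ i, 0 < b i) (f g : ℕ → ℕ)
    (hf1 : ∀ j, 1 ≤ j → 1 ≤ f j) (hg1 : ∀ j, 1 ≤ j → 1 ≤ g j)
    (hfmono : ∀ j j', 1 ≤ j → j < j' → f j < f j')
    (hgmono : ∀ j j', 1 ≤ j → j < j' → g j < g j')
    (h : ∀ j, 1 ≤ j → ehSigma a (f j) = ehSigma b (g j))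
    (t : ℝ) (ht : 0 < t)
    (hBa : ¬ ∃ k, 1 ≤ k ∧ (∀ j, 1 ≤ j → f j ≠ k) ∧ ehSigma a k = t)
    (hBb : ¬ ∃ k, 1 ≤ k ∧ (∀ j, 1 ≤ j → g j ≠ k) ∧ ehSigma b k = t) :
    multF a t = multF b t := by
  classical
  push_neg at hBa hBb
  have hca0 := cntm_nonneg hapos ht (a := a)
  have hcb0 := cntm_nonneg hbpos ht (a := b)
  set Ka := (cnt a t).toNat with hKa
  set Ma := (cntm a t).toNat with hMa
  set Kb := (cnt b t).toNat with hKb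
  set Mb := (cntm b t).toNat with hMb
  set Ja : Finset ℕ := (Finset.Icc 1 Ka).filter (fun j => 1 ≤ j ∧ ehSigma a (f j) = t) with hJa
  set Jb : Finset ℕ := (Finset.Icc 1 Kb).filter (fun j => 1 ≤ j ∧ ehSigma b (g j) = t) with hJb
  have cardA : (Finset.Ioc Ma Ka).card = Ja.card := by
    refine (Finset.card_nbij f ?_ ?_ ?_).symm
    · intro j hj
      rw [hJa, Finset.mem_coe, Finset.mem_filter] at hj
      obtain ⟨-, hj1, hjs⟩ := hj
      have := (sigma_eq_iff hn hapos (hf1 j hj1) ht).1 hjs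
      simp only [Finset.mem_coe, Finset.mem_Ioc]
      omega
    · intro j hj j' hj' hff
      simp only [hJa, Finset.coe_filter, Set.mem_setOf_eq] at hj hj'
      rcases lt_trichotomy j j' with hlt | heq | hlt
      · exact absurd hff (hfmono j j' hj.2.1 hlt).ne
      · exact heq
      · exact absurd hff.symm (hfmono j' j hj'.2.1 hlt).ne
    · intro k hk
      simp only [Finset.coe_Ioc, Set.mem_Ioc] at hk
      have hk1 : 1 ≤ k := by omega
      have hσk : ehSigma a k = t := by
        refine (sigma_eq_iff hn hapos hk1 ht).2 ⟨?_, ?_⟩ <;> omega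
      have hex : ∃ j, 1 ≤ j ∧ f j = k := by
        by_contra hno
        push_neg at hno
        exact hBa k hk1 (fun j hj => hno j hj) hσk
      obtain ⟨j, hj1, hjk⟩ := hex
      have hjle : j ≤ f j := le_f f hf1 hfmono j hj1
      refine ⟨j, ?_, hjk⟩
      simp only [hJa, Finset.coe_filter, Set.mem_setOf_eq, Finset.mem_Icc]
      exact ⟨⟨hj1, by omega⟩, hj1, hjk ▸ hσk⟩
  have cardB : (Finset.Ioc Mb Kb).card = Jb.card := by
    refine (Finset.card_nbij g ?_ ?_ ?_).symm
    · intro j hj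
      rw [hJb, Finset.mem_coe, Finset.mem_filter] at hj
      obtain ⟨-, hj1, hjs⟩ := hj
      have := (sigma_eq_iff hn hbpos (hg1 j hj1) ht).1 hjs
      simp only [Finset.mem_coe, Finset.mem_Ioc]
      omega
    · intro j hj j' hj' hff
      simp only [hJb, Finset.coe_filter, Set.mem_setOf_eq] at hj hj'
      rcases lt_trichotomy j j' with hlt | heq | hlt
      · exact absurd hff (hgmono j j' hj.2.1 hlt).ne
      · exact heq
      · exact absurd hff.symm (hgmono j' j hj'.2.1 hlt).ne
    · intro k hk
      simp only [Finset.coe_Ioc, Set.mem_Ioc] at hk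
      have hk1 : 1 ≤ k := by omega
      have hσk : ehSigma b k = t := by
        refine (sigma_eq_iff hn hbpos hk1 ht).2 ⟨?_, ?_⟩ <;> omega
      have hex : ∃ j, 1 ≤ j ∧ g j = k := by
        by_contra hno
        push_neg at hno
        exact hBb k hk1 (fun j hj => hno j hj) hσk
      obtain ⟨j, hj1, hjk⟩ := hex
      have hjle : j ≤ g j := le_f g hg1 hgmono j hj1
      refine ⟨j, ?_, hjk⟩
      simp only [hJb, Finset.coe_filter, Set.mem_setOf_eq, Finset.mem_Icc]
      exact ⟨⟨hj1, by omega⟩, hj1, hjk ▸ hσk⟩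
  have hJab : Ja = Jb := by
    ext j
    simp only [hJa, hJb, Finset.mem_filter, Finset.mem_Icc]
    constructor
    · rintro ⟨⟨hj1, -⟩, -, hjs⟩
      have hbs : ehSigma b (g j) = t := (h j hj1).symm.trans hjs
      have := (sigma_eq_iff hn hbpos (hg1 j hj1) ht).1 hbs
      have hjle : j ≤ g j := le_f g hg1 hgmono j hj1
      exact ⟨⟨hj1, by omega⟩, hj1, hbs⟩
    · rintro ⟨⟨hj1, -⟩, -, hjs⟩
      have has : ehSigma a (f j) = t := (h j hj1).trans hjs
      have := (sigma_eq_iff hn hapos (hf1 j hj1) ht).1 has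
      have hjle : j ≤ f j := le_f f hf1 hfmono j hj1
      exact ⟨⟨hj1, by omega⟩, hj1, has⟩
  have hma := multF_eq hapos ht (a := a)
  have hmb := multF_eq hbpos ht (a := b)
  have hle1 : cntm a t ≤ cnt a t := cntm_le_cnt
  have hle2 : cntm b t ≤ cnt b t := cntm_le_cnt
  have e1 : multF a t = (Finset.Ioc Ma Ka).card := by rw [Nat.card_Ioc]; omega
  have e2 : multF b t = (Finset.Ioc Mb Kb).card := by rw [Nat.card_Ioc]; omega
  rw [e1, e2, cardA, cardB, hJab]

lemma miss_finite (f : ℕ → ℕ) (N₀ : ℕ) (hf1 : ∀ j, 1 ≤ j → 1 ≤ f j)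
    (hfmono : ∀ j j', 1 ≤ j → j < j' → f j < f j')
    (hfbound : ∀ j, 1 ≤ j → f j ≤ j + N₀) :
    {k : ℕ | 1 ≤ k ∧ ∀ j, 1 ≤ j → f j ≠ k}.Finite := by
  classical
  by_contra hinf
  obtain ⟨S, hSsub, hScard⟩ := Set.Infinite.exists_subset_card_eq hinf (N₀ + 1)
  have hSne : S.Nonempty := Finset.card_pos.1 (by omega)
  set K := S.sup id with hK
  have hK1 : 1 ≤ K := by
    obtain ⟨s, hs⟩ := hSne
    have := (hSsub hs).1
    exact le_trans this (Finset.le_sup (f := id) hs)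
  have hinj : ∀ j ∈ Finset.Icc 1 K, f j ∈ (Finset.Icc 1 (K + N₀)) \ S := by
    intro j hj
    rw [Finset.mem_Icc] at hj
    rw [Finset.mem_sdiff, Finset.mem_Icc]
    refine ⟨⟨hf1 j hj.1, le_trans (hfbound j hj.1) (by omega)⟩, ?_⟩
    intro hfS
    exact (hSsub hfS).2 j hj.1 rfl
  have hcard := Finset.card_le_card_of_injOn f hinj ?_
  · have hsub : S ⊆ Finset.Icc 1 (K + N₀) := by
      intro s hs
      rw [Finset.mem_Icc]
      exact ⟨(hSsub hs).1, le_trans (Finset.le_sup (f := id) hs) (by omega)⟩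
    rw [Finset.card_sdiff_of_subset hsub, Nat.card_Icc, Nat.card_Icc, hScard] at hcard
    omega
  · intro j hj j' hj' hff
    simp only [Finset.coe_Icc, Set.mem_Icc] at hj hj'
    rcases lt_trichotomy j j' with hlt | heq | hlt
    · exact absurd hff (hfmono j j' hj.1 hlt).ne
    · exact heq
    · exact absurd hff.symm (hfmono j' j hj'.1 hlt).ne

lemma exists_good_prime (Bad : Set ℝ) (hBad : Bad.Finite) (c : ℝ) (hc : 0 < c) (T : Finset ℝ)
    (hT : ∀ x ∈ T, c < x) :
    ∃ p : ℕ, p.Prime ∧ (p:ℝ) * c ∉ Bad ∧ ∀ x ∈ T, ¬ ∃ m : ℕ, 1 ≤ m ∧ (p:ℝ) * c = (m:ℝ) * x := by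
  classical
  have h1 : {p : ℕ | (p:ℝ) * c ∈ Bad}.Finite := by
    apply Set.Finite.preimage _ hBad
    intro p _ q _ hpq
    have hpq' : (p:ℝ) * c = (q:ℝ) * c := hpq
    exact_mod_cast mul_right_cancel₀ hc.ne' hpq'
  have h2 : ∀ x ∈ T, {p : ℕ | p.Prime ∧ ∃ m : ℕ, 1 ≤ m ∧ (p:ℝ) * c = (m:ℝ) * x}.Finite := by
    intro x hxT
    have hx : c < x := hT x hxT
    apply Set.Subsingleton.finite
    rintro p ⟨hp, m, hm, hpm⟩ q ⟨hq, m', hm', hqm⟩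
    by_contra hne
    -- p c = m x, q c = m' x  ⇒  (p m') x... derive m q = m' p
    have hx0 : (0:ℝ) < x := lt_trans hc hx
    have key : (m:ℝ) * (q:ℝ) = (m':ℝ) * (p:ℝ) := by
      have e1 : (p:ℝ) * c * (q:ℝ) = (m:ℝ) * x * (q:ℝ) := by rw [hpm]
      have e2 : (q:ℝ) * c * (p:ℝ) = (m':ℝ) * x * (p:ℝ) := by rw [hqm]
      have : (m:ℝ) * x * (q:ℝ) = (m':ℝ) * x * (p:ℝ) := by
        rw [← e1, ← e2]; ring
      have := mul_right_cancel₀ hx0.ne' (by linarith [this] : (m:ℝ) * (q:ℝ) * x = (m':ℝ) * (p:ℝ) * x)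
      linarith
    have keyn : m * q = m' * p := by exact_mod_cast key
    have hdvd : q ∣ m' * p := ⟨m, by rw [← keyn]; ring⟩
    have hqp : ¬ q ∣ p := by
      intro hd
      exact hne ((Nat.prime_dvd_prime_iff_eq hq hp).1 hd).symm
    have hqm'' : q ∣ m' := (Nat.Prime.dvd_mul hq).1 hdvd |>.resolve_right hqp
    have hm'q : q ≤ m' := Nat.le_of_dvd (by omega) hqm''
    -- then c ≥ x, contradiction
    have : (q:ℝ) * c ≥ (q:ℝ) * x := by
      rw [hqm]
      have : (q:ℝ) ≤ (m':ℝ) := by exact_mod_cast hm'q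
      nlinarith
    have hq0 : (0:ℝ) < q := by exact_mod_cast hq.pos
    nlinarith
  have hfin : ({p : ℕ | (p:ℝ) * c ∈ Bad} ∪ ⋃ x ∈ T, {p : ℕ | p.Prime ∧ ∃ m : ℕ, 1 ≤ m ∧ (p:ℝ) * c = (m:ℝ) * x}).Finite :=
    Set.Finite.union h1 (Set.Finite.biUnion T.finite_toSet h2)
  obtain ⟨p, hp⟩ := (Nat.infinite_setOf_prime.diff hfin).nonempty
  simp only [Set.mem_diff, Set.mem_setOf_eq, Set.mem_union, Set.mem_iUnion, not_or, not_exists] at hp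
  obtain ⟨hprime, hnb, hnT⟩ := hp
  refine ⟨p, hprime, hnb, ?_⟩
  intro x hxT hex
  exact hnT x hxT ⟨hprime, hex⟩

open Classical in
noncomputable def multCount (A : Multiset ℝ) (t : ℝ) : ℕ :=
  (A.filter (fun x => ∃ m : ℕ, 1 ≤ m ∧ t = (m:ℝ) * x)).card

lemma stepB (Bad : Set ℝ) (hBad : Bad.Finite) :
    ∀ (N : ℕ) (A B : Multiset ℝ), Multiset.card A ≤ N →
    (∀ x ∈ A, 0 < x) → (∀ x ∈ B, 0 < x) →
    (∀ t : ℝ, 0 < t → t ∉ Bad → multCount A t = multCount B t) → A = B := by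
  classical
  intro N
  induction N with
  | zero =>
    intro A B hcard hA hB hmult
    have hA0 : A = 0 := Multiset.card_eq_zero.1 (by omega)
    subst hA0
    by_contra hne
    have hBne : B ≠ 0 := fun h0 => hne (by rw [h0])
    -- get min of B
    have hBne' : B.toFinset.Nonempty := by
      obtain ⟨x, hx⟩ := Multiset.exists_mem_of_ne_zero hBne
      exact ⟨x, Multiset.mem_toFinset.2 hx⟩
    set c := B.toFinset.min' hBne' with hc
    have hcB : c ∈ B := Multiset.mem_toFinset.1 (B.toFinset.min'_mem hBne')
    have hcpos : 0 < c := hB c hcB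
    have hcmin : ∀ x ∈ B, c ≤ x := fun x hx => B.toFinset.min'_le x (Multiset.mem_toFinset.2 hx)
    set T := B.toFinset.filter (fun x => c < x) with hT
    obtain ⟨p, hp, hpB, hpT⟩ := exists_good_prime Bad hBad c hcpos T
      (fun x hx => (Finset.mem_filter.1 hx).2)
    have hppos : (0:ℝ) < (p:ℝ) * c := by
      have := hp.pos
      positivity
    have := hmult ((p:ℝ) * c) hppos hpB
    rw [multCount, multCount, Multiset.filter_eq_nil.2 (by simp), Multiset.card_zero] at this
    -- RHS contains c
    have : c ∈ B.filter (fun x => ∃ m : ℕ, 1 ≤ m ∧ (p:ℝ) * c = (m:ℝ) * x) :=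
      Multiset.mem_filter.2 ⟨hcB, p, hp.one_lt.le, rfl⟩
    have hcard2 := Multiset.card_pos_iff_exists_mem.2 ⟨c, this⟩
    omega
  | succ N ih =>
    intro A B hcard hA hB hmult
    by_cases hAB : A + B = 0
    · rw [add_eq_zero] at hAB
      rw [hAB.1, hAB.2]
    · have hne' : (A + B).toFinset.Nonempty := by
        obtain ⟨x, hx⟩ := Multiset.exists_mem_of_ne_zero hAB
        exact ⟨x, Multiset.mem_toFinset.2 hx⟩
      set c := (A + B).toFinset.min' hne' with hc
      have hcAB : c ∈ A + B := Multiset.mem_toFinset.1 ((A+B).toFinset.min'_mem hne')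
      have hcpos : 0 < c := by
        rcases Multiset.mem_add.1 hcAB with h | h
        · exact hA c h
        · exact hB c h
      have hcmin : ∀ x ∈ A + B, c ≤ x := fun x hx =>
        (A+B).toFinset.min'_le x (Multiset.mem_toFinset.2 hx)
      set T := (A + B).toFinset.filter (fun x => c < x) with hT
      obtain ⟨p, hp, hpB, hpT⟩ := exists_good_prime Bad hBad c hcpos T
        (fun x hx => (Finset.mem_filter.1 hx).2)
      have hppos : (0:ℝ) < (p:ℝ) * c := by
        have := hp.pos
        positivity
      -- multCount at p*c equals count of c
      have keyA : multCount A ((p:ℝ) * c) = A.count c := by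
        rw [multCount, Multiset.count_eq_card_filter_eq]
        congr 1
        refine Multiset.filter_congr fun x hx => ?_
        constructor
        · rintro ⟨m, hm, hmx⟩
          by_contra hxc
          have hxT : x ∈ T := Finset.mem_filter.2 ⟨Multiset.mem_toFinset.2 (Multiset.mem_add.2 (Or.inl hx)),
            lt_of_le_of_ne (hcmin x (Multiset.mem_add.2 (Or.inl hx))) hxc⟩
          exact hpT x hxT ⟨m, hm, hmx⟩
        · rintro rfl
          exact ⟨p, hp.one_lt.le, rfl⟩
      have keyB : multCount B ((p:ℝ) * c) = B.count c := by
        rw [multCount, Multiset.count_eq_card_filter_eq]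
        congr 1
        refine Multiset.filter_congr fun x hx => ?_
        constructor
        · rintro ⟨m, hm, hmx⟩
          by_contra hxc
          have hxT : x ∈ T := Finset.mem_filter.2 ⟨Multiset.mem_toFinset.2 (Multiset.mem_add.2 (Or.inr hx)),
            lt_of_le_of_ne (hcmin x (Multiset.mem_add.2 (Or.inr hx))) hxc⟩
          exact hpT x hxT ⟨m, hm, hmx⟩
        · rintro rfl
          exact ⟨p, hp.one_lt.le, rfl⟩
      have hcounts : A.count c = B.count c := by
        rw [← keyA, ← keyB]
        exact hmult _ hppos hpB
      have hcpos' : 0 < A.count c + B.count c := by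
        have := Multiset.count_pos.2 hcAB
        rwa [Multiset.count_add] at this
      have hcA : c ∈ A := Multiset.count_pos.1 (by omega)
      have hcB : c ∈ B := Multiset.count_pos.1 (by omega)
      -- recurse on erase
      have hAe : c ::ₘ A.erase c = A := Multiset.cons_erase hcA
      have hBe : c ::ₘ B.erase c = B := Multiset.cons_erase hcB
      have hrec : A.erase c = B.erase c := by
        refine ih (A.erase c) (B.erase c) ?_ ?_ ?_ ?_
        · have h1 := Multiset.card_erase_of_mem hcA
          rw [h1, Nat.pred_eq_sub_one]
          have h2 : 1 ≤ Multiset.card A := Multiset.card_pos.2 (fun h0 => by simp [h0] at hcA)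
          omega
        · exact fun x hx => hA x (Multiset.mem_of_mem_erase hx)
        · exact fun x hx => hB x (Multiset.mem_of_mem_erase hx)
        · intro t ht htB
          have h1 : multCount A t = multCount (A.erase c) t
              + (if (∃ m : ℕ, 1 ≤ m ∧ t = (m:ℝ) * c) then 1 else 0) := by
            rw [← hAe, multCount, Multiset.filter_cons, Multiset.card_add, multCount]
            split <;> simp [add_comm]
          have h2 : multCount B t = multCount (B.erase c) t
              + (if (∃ m : ℕ, 1 ≤ m ∧ t = (m:ℝ) * c) then 1 else 0) := by
            rw [← hBe, multCount, Multiset.filter_cons, Multiset.card_add, multCount]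
            split <;> simp [add_comm]
          have := hmult t ht htB
          omega
      rw [← hAe, ← hBe, hrec]

lemma multCount_map {n : ℕ} (a : Fin n → ℝ) (t : ℝ) :
    multCount (Multiset.map a Finset.univ.val) t = multF a t := by
  classical
  rw [multCount, Multiset.filter_map, Multiset.card_map, multF, Finset.card, Finset.filter_val]
  congr 1


/-- A bounded ellipsoid can be recovered from the sequence of its Ekeland–Hofer capacities
with at most `N₀` members removed: if strictly increasing selections `f, g` of indices,
each omitting at most `N₀` indices (`f j ≤ j + N₀`, `g j ≤ j + N₀`), satisfy
`σ_{f(j)}(a) = σ_{g(j)}(b)` for all `j ≥ 1`, then the multisets `{a₁,…,aₙ}` and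
`{b₁,…,bₙ}` coincide. -/
theorem ellipsoid_recovered_from_capacities_minus_N (n : ℕ) (hn : 1 ≤ n) (N₀ : ℕ)
    (a b : Fin n → ℝ) (hapos : ∀ i, 0 < a i) (hbpos : ∀ i, 0 < b i)
    (f g : ℕ → ℕ)
    (hf1 : ∀ j, 1 ≤ j → 1 ≤ f j) (hg1 : ∀ j, 1 ≤ j → 1 ≤ g j)
    (hfmono : ∀ j j', 1 ≤ j → j < j' → f j < f j')
    (hgmono : ∀ j j', 1 ≤ j → j < j' → g j < g j')
    (hfbound : ∀ j, 1 ≤ j → f j ≤ j + N₀) (hgbound : ∀ j, 1 ≤ j → g j ≤ j + N₀)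
    (h : ∀ j, 1 ≤ j → ehSigma a (f j) = ehSigma b (g j)) :
    Multiset.map a Finset.univ.val = Multiset.map b Finset.univ.val := by
  classical
  set BadA : Set ℝ := {t : ℝ | ∃ k, 1 ≤ k ∧ (∀ j, 1 ≤ j → f j ≠ k) ∧ ehSigma a k = t} with hBA
  set BadB : Set ℝ := {t : ℝ | ∃ k, 1 ≤ k ∧ (∀ j, 1 ≤ j → g j ≠ k) ∧ ehSigma b k = t} with hBB
  have hBadA : BadA.Finite := by
    refine ((miss_finite f N₀ hf1 hfmono hfbound).image (ehSigma a)).subset ?_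
    rintro t ⟨k, hk1, hkm, hkt⟩
    exact ⟨k, ⟨hk1, hkm⟩, hkt⟩
  have hBadB : BadB.Finite := by
    refine ((miss_finite g N₀ hg1 hgmono hgbound).image (ehSigma b)).subset ?_
    rintro t ⟨k, hk1, hkm, hkt⟩
    exact ⟨k, ⟨hk1, hkm⟩, hkt⟩
  refine stepB (BadA ∪ BadB) (hBadA.union hBadB)
    (Multiset.card (Multiset.map a Finset.univ.val)) _ _ le_rfl ?_ ?_ ?_
  · intro x hx
    obtain ⟨i, -, rfl⟩ := Multiset.mem_map.1 hx
    exact hapos i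
  · intro x hx
    obtain ⟨i, -, rfl⟩ := Multiset.mem_map.1 hx
    exact hbpos i
  · intro t ht htB
    rw [Set.mem_union, not_or] at htB
    rw [multCount_map, multCount_map]
    exact stepA hn a b hapos hbpos f g hf1 hg1 hfmono hgmono h t ht htB.1 htB.2
end

section
/- Let n ≥ 1 and let U and V be nonempty convex open subsets of ℝ^{2n}. Then the following are equivalent: (i) for every α ∈ (0,1) there exists a symplectomorphism Φ of ℝ^{2n} with Φ(αU) ⊆ V; (ii) c(U) ≤ c(V) for every generalized capacity c on the convex open subsets of ℝ^{2n}. -/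
open scoped Pointwise ENNReal

/-- The standard symplectic form `ω₀ = Σⱼ dxⱼ∧dyⱼ` on `ℝ^{2n}`, modelled as
`(Fin n → ℝ) × (Fin n → ℝ)` (x-coordinates and y-coordinates). -/
noncomputable def omegaStd {n : ℕ} (u v : (Fin n → ℝ) × (Fin n → ℝ)) : ℝ :=
  ∑ j, (u.1 j * v.2 j - u.2 j * v.1 j)

/-- A symplectomorphism of `ℝ^{2n}`: a smooth diffeomorphism whose differential preserves
the standard symplectic form `ω₀` at every point. -/
def IsSymplectomorphismStd {n : ℕ}
    (Φ : (Fin n → ℝ) × (Fin n → ℝ) → (Fin n → ℝ) × (Fin n → ℝ)) : Prop :=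
  ContDiff ℝ (⊤ : ℕ∞) Φ ∧
  (∃ Ψ, ContDiff ℝ (⊤ : ℕ∞) Ψ ∧ Function.LeftInverse Ψ Φ ∧ Function.RightInverse Ψ Φ) ∧
  ∀ p u v, omegaStd (fderiv ℝ Φ p u) (fderiv ℝ Φ p v) = omegaStd u v

lemma symp_comp {n : ℕ} {Φ Ψ : (Fin n → ℝ) × (Fin n → ℝ) → (Fin n → ℝ) × (Fin n → ℝ)}
    (hΦ : IsSymplectomorphismStd Φ) (hΨ : IsSymplectomorphismStd Ψ) :
    IsSymplectomorphismStd (Ψ ∘ Φ) := by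
  obtain ⟨hΦs, ⟨Φ', hΦ's, hΦl, hΦr⟩, hΦω⟩ := hΦ
  obtain ⟨hΨs, ⟨Ψ', hΨ's, hΨl, hΨr⟩, hΨω⟩ := hΨ
  refine ⟨hΨs.comp hΦs, ⟨Φ' ∘ Ψ', hΦ's.comp hΨ's, ?_, ?_⟩, ?_⟩
  · intro x; simp [Function.comp, hΨl _, hΦl _]
  · intro x; simp [Function.comp, hΦr _, hΨr _]
  · intro p u v
    have h1 : DifferentiableAt ℝ Φ p := (hΦs.differentiable (by simp)).differentiableAt
    have h2 : DifferentiableAt ℝ Ψ (Φ p) := (hΨs.differentiable (by simp)).differentiableAt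
    rw [fderiv_comp p h2 h1]
    simp [hΨω, hΦω]

lemma symp_trans {n : ℕ} (v : (Fin n → ℝ) × (Fin n → ℝ)) :
    IsSymplectomorphismStd (fun x => x + v) := by
  refine ⟨contDiff_id.add contDiff_const,
    ⟨fun x => x - v, contDiff_id.sub contDiff_const, fun x => by simp, fun x => by simp⟩, ?_⟩
  intro p u w
  have h : fderiv ℝ (fun x : (Fin n → ℝ) × (Fin n → ℝ) => x + v) p
      = ContinuousLinearMap.id ℝ _ := by
    rw [fderiv_add_const]; exact fderiv_id
  simp [h]

lemma symp_conj {n : ℕ} {Φ : (Fin n → ℝ) × (Fin n → ℝ) → (Fin n → ℝ) × (Fin n → ℝ)}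
    (hΦ : IsSymplectomorphismStd Φ) {β : ℝ} (hβ : β ≠ 0) :
    IsSymplectomorphismStd (fun x => β⁻¹ • Φ (β • x)) := by
  obtain ⟨hΦs, ⟨Φ', hΦ's, hΦl, hΦr⟩, hΦω⟩ := hΦ
  have hsm : ContDiff ℝ (⊤ : ℕ∞) (fun x : (Fin n → ℝ) × (Fin n → ℝ) => β • x) :=
    contDiff_id.const_smul β
  have hinner : ContDiff ℝ (⊤ : ℕ∞) (fun x : (Fin n → ℝ) × (Fin n → ℝ) => Φ (β • x)) :=
    hΦs.comp hsm
  refine ⟨hinner.const_smul β⁻¹,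
    ⟨fun x => β⁻¹ • Φ' (β • x), (hΦ's.comp hsm).const_smul β⁻¹, ?_, ?_⟩, ?_⟩
  · intro x
    simp only [smul_inv_smul₀ hβ]
    rw [hΦl, inv_smul_smul₀ hβ]
  · intro x
    simp only [smul_inv_smul₀ hβ]
    rw [hΦr, inv_smul_smul₀ hβ]
  · intro p u v
    have key : ∀ w, fderiv ℝ (fun x => β⁻¹ • Φ (β • x)) p w = fderiv ℝ Φ (β • p) w := by
      intro w
      have hd : DifferentiableAt ℝ Φ (β • p) := (hΦs.differentiable (by simp)).differentiableAt
      have hdi : DifferentiableAt ℝ (fun x : (Fin n → ℝ) × (Fin n → ℝ) => Φ (β • x)) p :=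
        (hinner.differentiable (by simp)).differentiableAt
      rw [fderiv_fun_const_smul hdi β⁻¹]
      have hg : fderiv ℝ (fun x : (Fin n → ℝ) × (Fin n → ℝ) => β • x) p
          = β • ContinuousLinearMap.id ℝ _ := by
        rw [fderiv_fun_const_smul differentiableAt_fun_id β, fderiv_fun_id]
      have hcomp : fderiv ℝ (fun x : (Fin n → ℝ) × (Fin n → ℝ) => Φ (β • x)) p
          = (fderiv ℝ Φ (β • p)).comp (fderiv ℝ (fun x : (Fin n → ℝ) × (Fin n → ℝ) => β • x) p) :=
        fderiv_comp p hd ((differentiable_fun_id.const_smul β).differentiableAt)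
      rw [hcomp, hg]
      simp [map_smul, inv_smul_smul₀ hβ]
    rw [key u, key v, hΦω]

/-- For nonempty convex open subsets `U, V` of `ℝ^{2n}`, the following are equivalent:
(i) for every `α ∈ (0,1)` there is a symplectomorphism `Φ` of `ℝ^{2n}` with `Φ(αU) ⊆ V`;
(ii) `c(U) ≤ c(V)` for every generalized capacity `c` on the nonempty convex open subsets
of `ℝ^{2n}` (a `[0,∞]`-valued function, monotone under embeddings induced by global
symplectomorphisms and conformal: `c(αA) = α²c(A)`). -/
theorem convex_embedding_iff_all_capacities (n : ℕ) (hn : 1 ≤ n)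
    (U V : Set ((Fin n → ℝ) × (Fin n → ℝ)))
    (hUne : U.Nonempty) (hUconv : Convex ℝ U) (hUopen : IsOpen U)
    (hVne : V.Nonempty) (hVconv : Convex ℝ V) (hVopen : IsOpen V) :
    (∀ α : ℝ, 0 < α → α < 1 →
        ∃ Φ, IsSymplectomorphismStd Φ ∧ Φ '' (α • U) ⊆ V) ↔
      (∀ c : Set ((Fin n → ℝ) × (Fin n → ℝ)) → ℝ≥0∞,
        (∀ A B : Set ((Fin n → ℝ) × (Fin n → ℝ)),
          A.Nonempty → Convex ℝ A → IsOpen A → B.Nonempty → Convex ℝ B → IsOpen B →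
          (∃ Φ, IsSymplectomorphismStd Φ ∧ Φ '' A ⊆ B) → c A ≤ c B) →
        (∀ A : Set ((Fin n → ℝ) × (Fin n → ℝ)), A.Nonempty → Convex ℝ A → IsOpen A →
          ∀ α : ℝ, 0 < α → c (α • A) = ENNReal.ofReal (α ^ 2) * c A) →
        c U ≤ c V) := by
  constructor
  · -- (i) → (ii)
    intro h c hmono hconf
    refine ENNReal.le_of_forall_lt_one_mul_le ?_
    intro a ha
    have haTop : a ≠ ⊤ := (ha.trans (by norm_num)).ne
    have h01 : a.toReal < 1 := by
      have := ENNReal.toReal_strict_mono (by norm_num) ha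
      simpa using this
    have h0a : 0 ≤ a.toReal := ENNReal.toReal_nonneg
    set t : ℝ := Real.sqrt ((a.toReal + 1) / 2) with ht
    have ht2 : t ^ 2 = (a.toReal + 1) / 2 := Real.sq_sqrt (by linarith)
    have ht0 : 0 < t := Real.sqrt_pos.mpr (by linarith)
    have ht1 : t < 1 := by rw [ht, Real.sqrt_lt' one_pos]; norm_num; linarith
    obtain ⟨Φ, hΦ, hsub⟩ := h t ht0 ht1
    have hUV : c (t • U) ≤ c V :=
      hmono _ _ (hUne.smul_set) (hUconv.smul _) (hUopen.smul₀ ht0.ne')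
        hVne hVconv hVopen ⟨Φ, hΦ, hsub⟩
    have hc : c (t • U) = ENNReal.ofReal (t ^ 2) * c U := hconf U hUne hUconv hUopen t ht0
    calc a * c U ≤ ENNReal.ofReal (t ^ 2) * c U := by
          gcongr
          rw [← ENNReal.ofReal_toReal haTop]
          exact ENNReal.ofReal_le_ofReal (by rw [ht2]; linarith)
      _ = c (t • U) := hc.symm
      _ ≤ c V := hUV
  · -- (ii) → (i)
    intro h α hα0 hα1
    set S : Set ((Fin n → ℝ) × (Fin n → ℝ)) → Set ℝ≥0∞ := fun A =>
      {r | ∃ β : ℝ, 0 < β ∧ r = ENNReal.ofReal (β ^ 2) ∧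
        ∃ Φ, IsSymplectomorphismStd Φ ∧ Φ '' (β • U) ⊆ A} with hS
    set c : Set ((Fin n → ℝ) × (Fin n → ℝ)) → ℝ≥0∞ := fun A => sSup (S A) with hcdef
    have hmono : ∀ A B : Set ((Fin n → ℝ) × (Fin n → ℝ)),
        A.Nonempty → Convex ℝ A → IsOpen A → B.Nonempty → Convex ℝ B → IsOpen B →
        (∃ Φ, IsSymplectomorphismStd Φ ∧ Φ '' A ⊆ B) → c A ≤ c B := by
      rintro A B - - - - - - ⟨Ψ, hΨ, hΨsub⟩
      apply sSup_le_sSup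
      rintro r ⟨β, hβ, rfl, Φ, hΦ, hsub⟩
      refine ⟨β, hβ, rfl, Ψ ∘ Φ, symp_comp hΦ hΨ, ?_⟩
      rw [Set.image_comp]
      exact (Set.image_mono hsub).trans hΨsub
    have hconf : ∀ A : Set ((Fin n → ℝ) × (Fin n → ℝ)), A.Nonempty → Convex ℝ A → IsOpen A →
        ∀ γ : ℝ, 0 < γ → c (γ • A) = ENNReal.ofReal (γ ^ 2) * c A := by
      rintro A - - - γ hγ
      have key : S (γ • A) = (fun r => ENNReal.ofReal (γ ^ 2) * r) '' S A := by
        ext r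
        constructor
        · rintro ⟨β, hβ, rfl, Φ, hΦ, hsub⟩
          refine ⟨ENNReal.ofReal ((β / γ) ^ 2),
            ⟨β / γ, div_pos hβ hγ, rfl, fun x => γ⁻¹ • Φ (γ • x), symp_conj hΦ hγ.ne', ?_⟩, ?_⟩
          · rintro _ ⟨x, ⟨y, hy, rfl⟩, rfl⟩
            have hxy : γ • (β / γ) • y = β • y := by
              rw [smul_smul, mul_div_cancel₀ _ hγ.ne']
            dsimp only
            rw [hxy]
            have : Φ (β • y) ∈ γ • A := hsub ⟨β • y, ⟨y, hy, rfl⟩, rfl⟩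
            obtain ⟨a, haA, hEq⟩ := this
            dsimp only at hEq
            rw [← hEq, inv_smul_smul₀ hγ.ne']
            exact haA
          · dsimp only
            rw [← ENNReal.ofReal_mul (by positivity)]
            congr 1
            field_simp
        · rintro ⟨r, ⟨β, hβ, rfl, Φ, hΦ, hsub⟩, rfl⟩
          have hc : IsSymplectomorphismStd (fun x => (γ⁻¹)⁻¹ • Φ (γ⁻¹ • x)) :=
            symp_conj hΦ (inv_ne_zero hγ.ne')
          refine ⟨γ * β, mul_pos hγ hβ, ?_, fun x => γ • Φ (γ⁻¹ • x), by simpa using hc, ?_⟩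
          · dsimp only
            rw [← ENNReal.ofReal_mul (by positivity)]
            congr 1
            ring
          · rintro _ ⟨x, ⟨y, hy, rfl⟩, rfl⟩
            have hxy : γ⁻¹ • (γ * β) • y = β • y := by
              rw [smul_smul]
              congr 1
              field_simp
            dsimp only
            rw [hxy]
            exact ⟨Φ (β • y), hsub ⟨β • y, ⟨y, hy, rfl⟩, rfl⟩, rfl⟩
      rw [hcdef]
      simp only [key, sSup_image, ENNReal.mul_sSup]
    have hUc : (1 : ℝ≥0∞) ≤ c U := by
      refine ENNReal.le_of_forall_lt_one_mul_le ?_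
      intro a ha
      rw [mul_one]
      have haTop : a ≠ ⊤ := (ha.trans (by norm_num)).ne
      have h01 : a.toReal < 1 := by
        have := ENNReal.toReal_strict_mono (by norm_num) ha
        simpa using this
      have h0a : 0 ≤ a.toReal := ENNReal.toReal_nonneg
      set t : ℝ := Real.sqrt ((a.toReal + 1) / 2) with htdef
      have ht2 : t ^ 2 = (a.toReal + 1) / 2 := Real.sq_sqrt (by linarith)
      have ht0 : 0 < t := Real.sqrt_pos.mpr (by linarith)
      have ht1 : t < 1 := by rw [htdef, Real.sqrt_lt' one_pos]; norm_num; linarith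
      obtain ⟨p, hp⟩ := hUne
      have hmem : ENNReal.ofReal (t ^ 2) ∈ S U := by
        refine ⟨t, ht0, rfl, fun x => x + (1 - t) • p, symp_trans _, ?_⟩
        rintro _ ⟨x, ⟨y, hy, rfl⟩, rfl⟩
        exact hUconv hy hp ht0.le (by linarith) (by ring)
      calc a = ENNReal.ofReal a.toReal := (ENNReal.ofReal_toReal haTop).symm
        _ ≤ ENNReal.ofReal (t ^ 2) := ENNReal.ofReal_le_ofReal (by rw [ht2]; linarith)
        _ ≤ c U := le_sSup hmem
    have hUV : c U ≤ c V := h c hmono hconf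
    have hlt : ENNReal.ofReal (α ^ 2) < sSup (S V) := by
      refine lt_of_lt_of_le ?_ (hUc.trans hUV)
      exact ENNReal.ofReal_lt_one.mpr (by nlinarith)
    obtain ⟨r, hrS, hr⟩ := lt_sSup_iff.mp hlt
    obtain ⟨β, hβ, rfl, Φ, hΦ, hsub⟩ := hrS
    have hαβ : α < β := by
      have h2 : α ^ 2 < β ^ 2 :=
        (ENNReal.ofReal_lt_ofReal_iff (by positivity)).mp hr
      nlinarith
    obtain ⟨p, hp⟩ := hUne
    refine ⟨Φ ∘ (fun x => x + (β - α) • p), symp_comp (symp_trans _) hΦ, ?_⟩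
    rw [Set.image_comp]
    refine (Set.image_mono (f := Φ) ?_).trans hsub
    rintro _ ⟨x, ⟨y, hy, rfl⟩, rfl⟩
    refine ⟨(α / β) • y + (1 - α / β) • p,
      hUconv hy hp (by positivity) (by rw [sub_nonneg]; exact (div_le_one hβ).mpr hαβ.le) (by ring), ?_⟩
    have h1 : β * (α / β) = α := mul_div_cancel₀ _ hβ.ne'
    have h2 : β * (1 - α / β) = β - α := by field_simp
    dsimp only
    rw [smul_add, smul_smul, smul_smul, h1, h2]
end

section
/- Let A = {z ∈ ℝ² : 1 < π|z|² < 4} be the open annulus in the plane, and let α > 0 satisfy 3/4 < α² < 1. Then there is no symplectomorphism φ of ℝ² (i.e. no smooth diffeomorphism of ℝ² preserving the standard area form, equivalently with det Dφ ≡ 1) such that φ(αA) ⊆ A, where αA = {αz : z ∈ A} = {z : α² < π|z|² < 4α²}. -/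
open scoped Pointwise

/-- The standard symplectic (area) form `ω₀ = dx∧dy` on `ℝ² ≅ ℂ`. -/
noncomputable def omega2 (u v : ℂ) : ℝ := u.re * v.im - u.im * v.re

/-- A symplectomorphism of `ℝ² ≅ ℂ`: a smooth diffeomorphism whose differential preserves
the area form `ω₀` at every point (equivalently, `det Dφ ≡ 1`). -/
def IsSymplectomorphism2 (φ : ℂ → ℂ) : Prop :=
  ContDiff ℝ (⊤ : ℕ∞) φ ∧
  (∃ ψ : ℂ → ℂ, ContDiff ℝ (⊤ : ℕ∞) ψ ∧
    Function.LeftInverse ψ φ ∧ Function.RightInverse ψ φ) ∧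
  ∀ p u v, omega2 (fderiv ℝ φ p u) (fderiv ℝ φ p v) = omega2 u v

/-- The open annulus `A = {z ∈ ℝ² : 1 < π|z|² < 4}`. -/
def annulus : Set ℂ := {z | 1 < Real.pi * Complex.normSq z ∧ Real.pi * Complex.normSq z < 4}

open MeasureTheory

section Helpers

lemma ball_form' {c : ℝ} (hc : 0 ≤ c) :
    {z : ℂ | Real.pi * Complex.normSq z < c} = Metric.ball 0 (Real.sqrt (c / Real.pi)) := by
  ext z
  simp only [Set.mem_setOf_eq, Metric.mem_ball, Complex.dist_eq, sub_zero]
  rw [Complex.normSq_eq_norm_sq, Real.lt_sqrt (norm_nonneg z),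
    lt_div_iff₀ Real.pi_pos, mul_comm]

lemma closedBall_form' {c : ℝ} (hc : 0 ≤ c) :
    {z : ℂ | Real.pi * Complex.normSq z ≤ c} = Metric.closedBall 0 (Real.sqrt (c / Real.pi)) := by
  ext z
  simp only [Set.mem_setOf_eq, Metric.mem_closedBall, Complex.dist_eq, sub_zero]
  rw [Complex.normSq_eq_norm_sq, Real.le_sqrt (norm_nonneg z) (by positivity),
    le_div_iff₀ Real.pi_pos, mul_comm]

lemma vol_lt' {c : ℝ} (hc : 0 ≤ c) :
    volume {z : ℂ | Real.pi * Complex.normSq z < c} = ENNReal.ofReal c := by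
  rw [ball_form' hc, Complex.volume_ball, ← ENNReal.ofReal_pow (Real.sqrt_nonneg _),
    Real.sq_sqrt (by positivity), ← ENNReal.ofReal_coe_nnreal, NNReal.coe_real_pi,
    ← ENNReal.ofReal_mul (by positivity), div_mul_cancel₀]
  exact Real.pi_ne_zero

lemma vol_le' {c : ℝ} (hc : 0 ≤ c) :
    volume {z : ℂ | Real.pi * Complex.normSq z ≤ c} = ENNReal.ofReal c := by
  rw [closedBall_form' hc, Complex.volume_closedBall, ← ENNReal.ofReal_pow (Real.sqrt_nonneg _),
    Real.sq_sqrt (by positivity), ← ENNReal.ofReal_coe_nnreal, NNReal.coe_real_pi,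
    ← ENNReal.ofReal_mul (by positivity), div_mul_cancel₀]
  exact Real.pi_ne_zero

lemma isConnected_norm_gt' {r : ℝ} (hr : 0 ≤ r) : IsConnected {z : ℂ | r < ‖z‖} := by
  have h : {z : ℂ | r < ‖z‖} =
      (fun p : ℝ × ℂ => (r + p.1) • p.2) '' (Set.Ioi (0:ℝ) ×ˢ Metric.sphere (0:ℂ) 1) := by
    ext z
    constructor
    · intro hz
      have hz0 : z ≠ 0 := by
        intro h0
        simp [h0] at hz
        exact absurd hz (not_lt.2 hr)
      refine ⟨⟨‖z‖ - r, (‖z‖)⁻¹ • z⟩, ⟨?_, ?_⟩, ?_⟩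
      · exact Set.mem_Ioi.2 (sub_pos.2 hz)
      · simp [Metric.mem_sphere, Complex.dist_eq, norm_smul, abs_of_nonneg,
          inv_mul_cancel₀ (norm_ne_zero_iff.mpr hz0), norm_nonneg z,
          abs_of_nonneg (inv_nonneg.2 (norm_nonneg z))]
      · simp only [add_sub_cancel]
        rw [smul_smul, mul_inv_cancel₀ (norm_ne_zero_iff.mpr hz0), one_smul]
    · rintro ⟨⟨t, w⟩, ⟨ht, hw⟩, rfl⟩
      simp only [Set.mem_Ioi] at ht
      simp only [Metric.mem_sphere, Complex.dist_eq, sub_zero] at hw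
      simp only [Set.mem_setOf_eq]
      rw [norm_smul, Real.norm_eq_abs, hw, mul_one,
        abs_of_pos (by linarith)]
      linarith
  rw [h]
  refine IsConnected.image ?_ _ ?_
  · refine IsConnected.prod isConnected_Ioi ?_
    exact isConnected_sphere (by rw [Complex.rank_real_complex]; norm_num) 0 zero_le_one
  · fun_prop

lemma isConnected_gt' {c : ℝ} (hc : 0 ≤ c) :
    IsConnected {z : ℂ | c < Real.pi * Complex.normSq z} := by
  have h : {z : ℂ | c < Real.pi * Complex.normSq z} =
      {z : ℂ | Real.sqrt (c / Real.pi) < ‖z‖} := by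
    ext z
    simp only [Set.mem_setOf_eq, Complex.normSq_eq_norm_sq]
    rcases (norm_nonneg z).eq_or_lt with h0 | h0
    · constructor
      · intro h; rw [← h0] at h; nlinarith [Real.pi_pos]
      · intro h
        exact absurd ((Real.sqrt_nonneg (c / Real.pi)).trans_lt h) (by rw [← h0]; exact lt_irrefl 0)
    · rw [Real.sqrt_lt' h0, div_lt_iff₀ Real.pi_pos, mul_comm]
  rw [h]
  exact isConnected_norm_gt' (Real.sqrt_nonneg _)

lemma normSq_real_smul' (r : ℝ) (z : ℂ) :
    Complex.normSq (r • z) = r ^ 2 * Complex.normSq z := by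
  rw [Complex.real_smul, map_mul, Complex.normSq_ofReal, sq]

lemma smul_annulus' {α : ℝ} (hα : 0 < α) :
    α • annulus = {z : ℂ | α ^ 2 < Real.pi * Complex.normSq z ∧
      Real.pi * Complex.normSq z < 4 * α ^ 2} := by
  ext z
  rw [Set.mem_smul_set_iff_inv_smul_mem₀ (ne_of_gt hα)]
  simp only [annulus, Set.mem_setOf_eq, normSq_real_smul']
  have h2 : α ^ 2 > 0 := by positivity
  rw [inv_pow]
  have key : Real.pi * ((α ^ 2)⁻¹ * Complex.normSq z)
      = Real.pi * Complex.normSq z / α ^ 2 := by ring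
  rw [key, lt_div_iff₀ h2, div_lt_iff₀ h2]
  constructor <;> rintro ⟨hl, hr⟩ <;> exact ⟨by linarith, by linarith⟩

lemma mem_closure_ann' {a b : ℝ} (ha : 0 < a) (hab : a < b) {z : ℂ}
    (hz : a ≤ Real.pi * Complex.normSq z) (hz' : Real.pi * Complex.normSq z ≤ b) :
    z ∈ closure {w : ℂ | a < Real.pi * Complex.normSq w ∧ Real.pi * Complex.normSq w < b} := by
  set s : ℝ := Real.pi * Complex.normSq z with hs
  have hs0 : 0 < s := lt_of_lt_of_le ha hz
  have hcl : s ∈ closure (Set.Ioo a b) := by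
    rw [closure_Ioo hab.ne]
    exact ⟨hz, hz'⟩
  have hne : (nhdsWithin s (Set.Ioo a b)).NeBot :=
    mem_closure_iff_nhdsWithin_neBot.1 hcl
  refine mem_closure_of_tendsto (f := fun u : ℝ => Real.sqrt (u / s) • z)
    (b := nhdsWithin s (Set.Ioo a b)) ?_ ?_
  · have hcont : ContinuousAt (fun u : ℝ => Real.sqrt (u / s) • z) s := by fun_prop
    have heq : Real.sqrt (s / s) • z = z := by
      rw [div_self hs0.ne', Real.sqrt_one, one_smul]
    simpa [heq] using hcont.tendsto.mono_left nhdsWithin_le_nhds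
  · filter_upwards [self_mem_nhdsWithin] with u hu
    obtain ⟨hu1, hu2⟩ := hu
    have hus : 0 ≤ u / s := le_of_lt (div_pos (ha.trans hu1) hs0)
    simp only [Set.mem_setOf_eq, normSq_real_smul', Real.sq_sqrt hus]
    rw [← mul_assoc, mul_comm Real.pi (u/s), mul_assoc, ← hs, div_mul_cancel₀ _ hs0.ne']
    exact ⟨hu1, hu2⟩

lemma det_fderiv_eq_one' {φ : ℂ → ℂ}
    (hω : ∀ p u v, omega2 (fderiv ℝ φ p u) (fderiv ℝ φ p v) = omega2 u v) (p : ℂ) :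
    (fderiv ℝ φ p).det = 1 := by
  set L := fderiv ℝ φ p
  have h := hω p 1 Complex.I
  simp only [omega2, Complex.one_re, Complex.one_im, Complex.I_re, Complex.I_im] at h
  rw [ContinuousLinearMap.det, ← LinearMap.det_toMatrix Complex.basisOneI,
    Matrix.det_fin_two]
  simp only [LinearMap.toMatrix_apply, Complex.coe_basisOneI, Complex.coe_basisOneI_repr,
    ContinuousLinearMap.coe_coe, Matrix.cons_val_zero, Matrix.cons_val_one, Matrix.head_cons]
  linarith [h]

lemma vol_image' {φ : ℂ → ℂ} (hφ : IsSymplectomorphism2 φ) {s : Set ℂ}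
    (hs : MeasurableSet s) : volume (φ '' s) = volume s := by
  obtain ⟨hsm, ⟨ψ, hψsm, hl, hr⟩, hω⟩ := hφ
  have hd : Differentiable ℝ φ := hsm.differentiable (by simp)
  have hinj : Function.Injective φ := hl.injective
  rw [← lintegral_abs_det_fderiv_eq_addHaar_image volume hs
    (fun x _ => (hd x).hasFDerivAt.hasFDerivWithinAt) hinj.injOn]
  simp only [det_fderiv_eq_one' hω, abs_one, ENNReal.ofReal_one]
  simp [lintegral_one]

end Helpers

/-- For `3/4 < α² < 1`, the dilated annulus `αA` cannot be mapped into `A` by a global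
symplectomorphism of `ℝ²`. -/
theorem no_symplectomorphism_annulus_into_annulus (α : ℝ) (hα : 0 < α)
    (h1 : 3 / 4 < α ^ 2) (h2 : α ^ 2 < 1) :
    ¬ ∃ φ : ℂ → ℂ, IsSymplectomorphism2 φ ∧ φ '' (α • annulus) ⊆ annulus := by
  rintro ⟨φ, hφ, himg⟩
  obtain ⟨hsm, ⟨ψ, hψsm, hl, hr⟩, hω⟩ := hφ
  have hφsymp : IsSymplectomorphism2 φ := ⟨hsm, ⟨ψ, hψsm, hl, hr⟩, hω⟩
  have hφc : Continuous φ := hsm.continuous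
  have hψc : Continuous ψ := hψsm.continuous
  have hsurj : Function.Surjective φ := hr.surjective
  have ha2 : (0:ℝ) < α ^ 2 := by positivity
  have hcont : Continuous (fun z : ℂ => Real.pi * Complex.normSq z) :=
    continuous_const.mul Complex.continuous_normSq
  -- key sets
  set U : Set ℂ := φ ⁻¹' {z : ℂ | Real.pi * Complex.normSq z < 1} with hU
  set V : Set ℂ := φ ⁻¹' {z : ℂ | 4 < Real.pi * Complex.normSq z} with hV
  set D : Set ℂ := {z : ℂ | Real.pi * Complex.normSq z < α ^ 2} with hD
  set E : Set ℂ := {z : ℂ | 4 * α ^ 2 < Real.pi * Complex.normSq z} with hE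
  set K : Set ℂ := {z : ℂ | α ^ 2 ≤ Real.pi * Complex.normSq z ∧
    Real.pi * Complex.normSq z ≤ 4 * α ^ 2} with hK
  have hHopen : IsOpen {z : ℂ | Real.pi * Complex.normSq z < 1} :=
    isOpen_lt hcont continuous_const
  have hEAopen : IsOpen {z : ℂ | 4 < Real.pi * Complex.normSq z} :=
    isOpen_lt continuous_const hcont
  have hUopen : IsOpen U := hHopen.preimage hφc
  have hVopen : IsOpen V := hEAopen.preimage hφc
  have hDopen : IsOpen D := isOpen_lt hcont continuous_const
  have hEopen : IsOpen E := isOpen_lt continuous_const hcont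
  -- volumes of U and V
  have hUvol : volume U = ENNReal.ofReal 1 := by
    rw [← vol_image' hφsymp hUopen.measurableSet, Set.image_preimage_eq _ hsurj,
      vol_lt' zero_le_one]
  have hVvol : ENNReal.ofReal 96 ≤ volume V := by
    rw [← vol_image' hφsymp hVopen.measurableSet, Set.image_preimage_eq _ hsurj]
    have hsub : {z : ℂ | Real.pi * Complex.normSq z ≤ 100} \
        {z : ℂ | Real.pi * Complex.normSq z ≤ 4} ⊆
        {z : ℂ | 4 < Real.pi * Complex.normSq z} := by
      rintro z ⟨hz1, hz2⟩
      simp only [Set.mem_setOf_eq] at *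
      linarith [not_le.1 hz2]
    refine le_trans ?_ (measure_mono hsub)
    rw [measure_diff (fun z hz => by simp only [Set.mem_setOf_eq] at *; linarith)
      ((isClosed_le hcont continuous_const).measurableSet.nullMeasurableSet)
      (by rw [vol_le' (by norm_num : (0:ℝ) ≤ 4)]; exact ENNReal.ofReal_ne_top),
      vol_le' (by norm_num : (0:ℝ) ≤ 100), vol_le' (by norm_num : (0:ℝ) ≤ 4),
      ← ENNReal.ofReal_sub _ (by norm_num)]
    norm_num
  -- U and V are connected
  have hpreim : ∀ S : Set ℂ, φ ⁻¹' S = ψ '' S := by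
    intro S
    ext z
    simp only [Set.mem_preimage, Set.mem_image]
    constructor
    · intro h; exact ⟨φ z, h, hl z⟩
    · rintro ⟨w, hw, rfl⟩; rwa [hr w]
  have hUconn : IsConnected U := by
    rw [hU, hpreim]
    refine IsConnected.image ?_ _ hψc.continuousOn
    refine ⟨⟨0, by simp [Complex.normSq_zero]⟩, ?_⟩
    rw [ball_form' zero_le_one]
    exact (convex_ball _ _).isPreconnected
  have hVconn : IsConnected V := by
    rw [hV, hpreim]
    exact IsConnected.image (isConnected_gt' (by norm_num)) _ hψc.continuousOn
  -- U and V are disjoint from the closure of α • annulus, hence from K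
  have hKclos : K ⊆ closure (α • annulus) := by
    intro z hz
    rw [smul_annulus' hα]
    exact mem_closure_ann' ha2 (by linarith) hz.1 hz.2
  have hUdisj : ∀ z ∈ U, z ∉ K := by
    intro z hzU hzK
    obtain ⟨w, hwU, hw⟩ := mem_closure_iff.1 (hKclos hzK) U hUopen hzU
    have := himg ⟨w, hw, rfl⟩
    simp only [annulus, Set.mem_setOf_eq] at this
    simp only [hU, Set.mem_preimage, Set.mem_setOf_eq] at hwU
    linarith [this.1]
  have hVdisj : ∀ z ∈ V, z ∉ K := by
    intro z hzV hzK
    obtain ⟨w, hwV, hw⟩ := mem_closure_iff.1 (hKclos hzK) V hVopen hzV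
    have := himg ⟨w, hw, rfl⟩
    simp only [annulus, Set.mem_setOf_eq] at this
    simp only [hV, Set.mem_preimage, Set.mem_setOf_eq] at hwV
    linarith [this.2]
  -- dichotomy
  have hDE : Disjoint D E := by
    rw [Set.disjoint_left]
    intro z hzD hzE
    simp only [hD, hE, Set.mem_setOf_eq] at *
    linarith
  have hsubUnion : ∀ z : ℂ, z ∉ K → z ∈ D ∪ E := by
    intro z hz
    simp only [hK, Set.mem_setOf_eq, not_and_or, not_le] at hz
    rcases hz with h | h
    · exact Or.inl h
    · exact Or.inr h
  have hUcase : U ⊆ D ∨ U ⊆ E :=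
    hUconn.isPreconnected.subset_or_subset hDopen hEopen hDE
      (fun z hz => hsubUnion z (hUdisj z hz))
  have hVcase : V ⊆ D ∨ V ⊆ E :=
    hVconn.isPreconnected.subset_or_subset hDopen hEopen hDE
      (fun z hz => hsubUnion z (hVdisj z hz))
  have hDvol : volume D = ENNReal.ofReal (α ^ 2) := vol_lt' ha2.le
  -- rule out U ⊆ D
  have hUE : U ⊆ E := by
    rcases hUcase with h | h
    · exfalso
      have := (measure_mono h).trans_eq hDvol
      rw [hUvol] at this
      have := (ENNReal.ofReal_le_ofReal_iff ha2.le).1 this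
      linarith
    · exact h
  -- rule out V ⊆ D
  have hVE : V ⊆ E := by
    rcases hVcase with h | h
    · exfalso
      have := (measure_mono h).trans_eq hDvol
      have h96 := hVvol.trans this
      have := (ENNReal.ofReal_le_ofReal_iff ha2.le).1 h96
      linarith
    · exact h
  -- the closed disk B of area 4α² maps into the closed annulus
  set B : Set ℂ := {z : ℂ | Real.pi * Complex.normSq z ≤ 4 * α ^ 2} with hB
  have hBimg : φ '' B ⊆ {z : ℂ | 1 ≤ Real.pi * Complex.normSq z ∧
      Real.pi * Complex.normSq z ≤ 4} := by
    rintro _ ⟨z, hz, rfl⟩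
    simp only [hB, Set.mem_setOf_eq] at hz
    constructor
    · by_contra hlt
      have hzU : z ∈ U := by simp only [hU, Set.mem_preimage, Set.mem_setOf_eq]; linarith
      have := hUE hzU
      simp only [hE, Set.mem_setOf_eq] at this
      linarith
    · by_contra hlt
      have hzV : z ∈ V := by simp only [hV, Set.mem_preimage, Set.mem_setOf_eq]; linarith
      have := hVE hzV
      simp only [hE, Set.mem_setOf_eq] at this
      linarith
  -- volume comparison
  have hBmeas : MeasurableSet B := (isClosed_le hcont continuous_const).measurableSet
  have hBvol : volume (φ '' B) = ENNReal.ofReal (4 * α ^ 2) := by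
    rw [vol_image' hφsymp hBmeas, hB, vol_le' (by positivity)]
  have hAbar : volume {z : ℂ | 1 ≤ Real.pi * Complex.normSq z ∧
      Real.pi * Complex.normSq z ≤ 4} = ENNReal.ofReal 3 := by
    have hset : {z : ℂ | 1 ≤ Real.pi * Complex.normSq z ∧ Real.pi * Complex.normSq z ≤ 4} =
        {z : ℂ | Real.pi * Complex.normSq z ≤ 4} \
          {z : ℂ | Real.pi * Complex.normSq z < 1} := by
      ext z
      simp only [Set.mem_setOf_eq, Set.mem_diff, not_lt]
      tauto
    rw [hset, measure_diff (fun z hz => by simp only [Set.mem_setOf_eq] at *; linarith)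
      (hHopen.measurableSet.nullMeasurableSet)
      (by rw [vol_lt' zero_le_one]; exact ENNReal.ofReal_ne_top),
      vol_le' (by norm_num : (0:ℝ) ≤ 4), vol_lt' zero_le_one,
      ← ENNReal.ofReal_sub _ (by norm_num)]
    norm_num
  have hfinal : ENNReal.ofReal (4 * α ^ 2) ≤ ENNReal.ofReal 3 := by
    rw [← hBvol, ← hAbar]
    exact measure_mono hBimg
  have : 4 * α ^ 2 ≤ 3 := (ENNReal.ofReal_le_ofReal_iff (by norm_num)).1 hfinal
  linarith
end

section
/- Let c be a function from the polydiscs P(a₁,a₂) ⊆ ℝ⁴ (a₁, a₂ > 0) to [0,∞) satisfying: (Monotonicity) c(P) ≤ c(P') whenever there is a linear symplectomorphism L of ℝ⁴ with L(P) ⊆ P'; (Conformality) c(αP(a₁,a₂)) = α²·c(P(a₁,a₂)) for α > 0, where αU = {αx : x ∈ U}; and (Normalization) c(P(1,1)) = 1. Then for every a ∈ (0,1], c(P(a,1)) ≤ 1/2 + a/2 + √a. [This follows since the linear symplectomorphism (z₁,z₂) ↦ ((z₁+z₂)/√2, (z₁−z₂)/√2) of ℂ² maps P(a,b) into P(c',c')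 with c' = (a+b)/2 + √(ab).] -/
/-- The standard symplectic form `ω₀` on `ℝ⁴ ≅ ℂ²`. -/
noncomputable def omega4 (u v : ℂ × ℂ) : ℝ :=
  u.1.re * v.1.im - u.1.im * v.1.re + (u.2.re * v.2.im - u.2.im * v.2.re)

/-- The open polydisc `P(a₁,a₂) = {z ∈ ℂ² : |z₁|² < a₁, |z₂|² < a₂}`. -/
def polydisc (a₁ a₂ : ℝ) : Set (ℂ × ℂ) :=
  {z | Complex.normSq z.1 < a₁ ∧ Complex.normSq z.2 < a₂}

noncomputable def Tfun (z : ℂ × ℂ) : ℂ × ℂ :=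
  ((Real.sqrt 2)⁻¹ • (z.1 + z.2), (Real.sqrt 2)⁻¹ • (z.1 - z.2))

lemma ksq : ((Real.sqrt 2)⁻¹ : ℝ) * (Real.sqrt 2)⁻¹ * 2 = 1 := by
  have h2 : Real.sqrt 2 * Real.sqrt 2 = 2 := Real.mul_self_sqrt (by norm_num)
  have h : (0:ℝ) < Real.sqrt 2 := Real.sqrt_pos.mpr (by norm_num)
  field_simp
  rw [Real.sq_sqrt (by norm_num)]

lemma kCsq : ((Real.sqrt 2 : ℝ) : ℂ)⁻¹ * ((Real.sqrt 2 : ℝ) : ℂ)⁻¹ * 2 = 1 := by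
  have := congrArg (Complex.ofReal) ksq
  push_cast at this
  exact this

noncomputable def Tequiv : (ℂ × ℂ) ≃ₗ[ℝ] (ℂ × ℂ) where
  toFun := Tfun
  invFun := Tfun
  map_add' x y := by
    simp only [Tfun, Complex.real_smul, Prod.fst_add, Prod.snd_add, Prod.mk_add_mk, Prod.mk.injEq]
    push_cast
    constructor <;> ring
  map_smul' r x := by
    simp only [Tfun, Complex.real_smul, Prod.smul_fst, Prod.smul_snd, Prod.smul_mk,
      RingHom.id_apply, Prod.mk.injEq]
    push_cast
    constructor <;> ring
  left_inv z := by
    simp only [Tfun, Complex.real_smul]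
    push_cast
    ext1 <;> simp only
    · linear_combination z.1 * kCsq
    · linear_combination z.2 * kCsq
  right_inv z := by
    simp only [Tfun, Complex.real_smul]
    push_cast
    ext1 <;> simp only
    · linear_combination z.1 * kCsq
    · linear_combination z.2 * kCsq

lemma Tomega (u v : ℂ × ℂ) : omega4 (Tequiv u) (Tequiv v) = omega4 u v := by
  show omega4 (Tfun u) (Tfun v) = omega4 u v
  simp only [omega4, Tfun, Complex.real_smul, Complex.mul_re, Complex.mul_im,
    Complex.add_re, Complex.add_im, Complex.sub_re, Complex.sub_im,
    Complex.ofReal_re, Complex.ofReal_im]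
  linear_combination (u.1.re*v.1.im - u.1.im*v.1.re + (u.2.re*v.2.im - u.2.im*v.2.re)) * ksq

lemma Timg (a : ℝ) (ha : 0 < a) (ha1 : a ≤ 1) :
    (Tequiv : ℂ × ℂ → ℂ × ℂ) '' polydisc a 1 ⊆
      polydisc ((a + 1) / 2 + Real.sqrt a) ((a + 1) / 2 + Real.sqrt a) := by
  rintro _ ⟨z, ⟨h1, h2⟩, rfl⟩
  have hk2 : ((Real.sqrt 2)⁻¹ : ℝ) ^ 2 = 1 / 2 := by nlinarith [ksq]
  set x := ‖z.1‖ with hx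
  set y := ‖z.2‖ with hy
  have hx0 : 0 ≤ x := norm_nonneg _
  have hy0 : 0 ≤ y := norm_nonneg _
  have hx2 : x ^ 2 < a := by rw [hx, Complex.sq_norm]; exact h1
  have hy2 : y ^ 2 < 1 := by rw [hy, Complex.sq_norm]; exact h2
  have hy1 : y ≤ 1 := by nlinarith
  have hxs : x ≤ Real.sqrt a := by
    rw [hx]
    exact (Real.le_sqrt hx0 ha.le).mpr hx2.le
  have hs0 : 0 ≤ Real.sqrt a := Real.sqrt_nonneg a
  have key : ∀ w : ℂ, ‖w‖ ≤ x + y →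
      Complex.normSq ((Real.sqrt 2)⁻¹ • w) < (a + 1) / 2 + Real.sqrt a := by
    intro w hw
    have habs0 : 0 ≤ ‖w‖ := norm_nonneg w
    have h1 : Complex.normSq ((Real.sqrt 2)⁻¹ • w) =
        ((Real.sqrt 2)⁻¹ : ℝ) ^ 2 * Complex.normSq w := by
      rw [Complex.real_smul, Complex.normSq_mul, Complex.normSq_ofReal]; ring
    have h2 : Complex.normSq w = ‖w‖ ^ 2 := (Complex.sq_norm w).symm
    rw [h1, h2, hk2]
    nlinarith [mul_le_mul hxs hy1 hy0 hs0]
  have hfst : ‖z.1 + z.2‖ ≤ x + y := norm_add_le _ _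
  have hsnd : ‖z.1 - z.2‖ ≤ x + y := by
    simpa using norm_sub_le z.1 z.2
  exact ⟨key _ hfst, key _ hsnd⟩

/-- Any normalized capacity `c` on 4-dimensional polydiscs, monotone under linear
symplectic embeddings and conformal (note `αP(a₁,a₂) = P(α²a₁,α²a₂)`), satisfies
`c(P(a,1)) ≤ 1/2 + a/2 + √a` for `a ∈ (0,1]`. Here `c` is recorded as a function of the
parameters `(a₁, a₂)` of the polydisc `P(a₁,a₂)`. -/
theorem capacity_polydisc_upper_bound (c : ℝ → ℝ → ℝ)
    (hmono : ∀ a₁ a₂ b₁ b₂ : ℝ, 0 < a₁ → 0 < a₂ → 0 < b₁ → 0 < b₂ →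
      (∃ L : (ℂ × ℂ) ≃ₗ[ℝ] (ℂ × ℂ), (∀ u v, omega4 (L u) (L v) = omega4 u v) ∧
        (L : ℂ × ℂ → ℂ × ℂ) '' polydisc a₁ a₂ ⊆ polydisc b₁ b₂) →
      c a₁ a₂ ≤ c b₁ b₂)
    (hconf : ∀ α a₁ a₂ : ℝ, 0 < α → 0 < a₁ → 0 < a₂ →
      c (α ^ 2 * a₁) (α ^ 2 * a₂) = α ^ 2 * c a₁ a₂)
    (hnorm : c 1 1 = 1) :
    ∀ a : ℝ, 0 < a → a ≤ 1 → c a 1 ≤ 1 / 2 + a / 2 + Real.sqrt a := by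
  intro a ha ha1
  have hs0 : 0 ≤ Real.sqrt a := Real.sqrt_nonneg a
  set c' : ℝ := (a + 1) / 2 + Real.sqrt a with hc'def
  have hc' : 0 < c' := by positivity
  have step1 : c a 1 ≤ c c' c' :=
    hmono a 1 c' c' ha one_pos hc' hc' ⟨Tequiv, Tomega, Timg a ha ha1⟩
  have hsq : (Real.sqrt c') ^ 2 = c' := Real.sq_sqrt hc'.le
  have step2 : c c' c' = c' := by
    have := hconf (Real.sqrt c') 1 1 (Real.sqrt_pos.mpr hc') one_pos one_pos
    rw [mul_one, hsq, hnorm, mul_one] at this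
    exact this
  refine (step1.trans_eq step2).trans ?_
  rw [hc'def]
  linarith
end
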